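/- arXiv:2302.05526 — 7 statements merged into one kernel-verified Lean document; each statement's English description precedes it below -/
import Mathlib

section
/- For any set system (V, C), a component C ∈ C, and a subset X ⊆ C, there exists no minimal removable set of C disjoint from X if and only if C is the only component C' ∈ C satisfying X ⊆ C' ⊆ C. (Here a nonempty Y ⊆ C is a removable set of C if C \ Y ∈ C, and a minimal removable set (MRS) if no proper nonempty subset Z ⊊ Y satisfies C \ Z ∈ C.) -/
open Set

/-- `Y` is a minimal removable set (MRS) of component `C` in set system `𝒞`. -/
def IsMRS {α : Type*} (𝒞 : Set (Set α)) (C Y : Set α) : Prop :=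
  Y.Nonempty ∧ Y ⊆ C ∧ C \ Y ∈ 𝒞 ∧ ∀ Z : Set α, Z.Nonempty → Z ⊂ Y → C \ Z ∉ 𝒞

/-- The set system `𝒞` has the subset-disjoint (SD) property. -/
def SDProperty {α : Type*} (𝒞 : Set (Set α)) : Prop :=
  ∀ C ∈ 𝒞, ∀ C' ∈ 𝒞, C' ⊂ C → ∀ Y : Set α, IsMRS 𝒞 C Y → Y ⊆ C' ∨ Y ∩ C' = ∅

theorem stmt0 {α : Type*} [Fintype α] (𝒞 : Set (Set α)) (C : Set α) (hC : C ∈ 𝒞)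
    (X : Set α) (hX : X ⊆ C) :
    (¬ ∃ Y : Set α, IsMRS 𝒞 C Y ∧ Y ∩ X = ∅) ↔
      {C' | C' ∈ 𝒞 ∧ X ⊆ C' ∧ C' ⊆ C} = {C} := by
  constructor
  · intro h
    ext C'
    simp only [mem_setOf_eq, mem_singleton_iff]
    constructor
    · rintro ⟨hC', hXC', hC'C⟩
      by_contra hne
      have hYne : (C \ C').Nonempty :=
        diff_nonempty.mpr fun hsub => hne (subset_antisymm hC'C hsub)
      set S : Set (Set α) := {Z | Z.Nonempty ∧ Z ⊆ C \ C' ∧ C \ Z ∈ 𝒞} with hS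
      have hYS : C \ C' ∈ S := by
        refine ⟨hYne, le_refl _, ?_⟩
        rwa [diff_diff_cancel_left hC'C]
      obtain ⟨Z, hZS, hmin⟩ :=
        (Finite.to_wellFoundedLT (α := Set α)).wf.has_min S ⟨_, hYS⟩
      obtain ⟨hZne, hZY, hCZ⟩ := hZS
      refine h ⟨Z, ⟨hZne, hZY.trans diff_subset, hCZ, ?_⟩, ?_⟩
      · intro W hWne hWZ hCW
        exact hmin W ⟨hWne, hWZ.subset.trans hZY, hCW⟩ hWZ
      · apply eq_empty_of_subset_empty
        rintro x ⟨hxZ, hxX⟩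
        exact (hZY hxZ).2 (hXC' hxX)
    · rintro rfl; exact ⟨hC, hX, le_refl _⟩
  · intro heq ⟨Y, ⟨hYne, hYC, hCY, _⟩, hYX⟩
    have : C \ Y ∈ ({C' | C' ∈ 𝒞 ∧ X ⊆ C' ∧ C' ⊆ C} : Set (Set α)) := by
      refine ⟨hCY, ?_, diff_subset⟩
      intro x hx
      refine ⟨hX hx, fun hxY => ?_⟩
      have : x ∈ Y ∩ X := ⟨hxY, hx⟩
      simp [hYX] at this
    rw [heq, mem_singleton_iff] at this
    obtain ⟨y, hy⟩ := hYne
    have hy2 : y ∈ C \ Y := by rw [this]; exact hYC hy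
    exact hy2.2 hy
end

section
/- In a set system (V, C) with subset-disjoint (SD) property, for every component C ∈ C, any two distinct minimal removable sets Y₁, Y₂ of C are disjoint. -/
open Set

theorem stmt1 {α : Type*} (𝒞 : Set (Set α)) (hSD : SDProperty 𝒞) (C : Set α) (hC : C ∈ 𝒞)
    (Y₁ Y₂ : Set α) (h1 : IsMRS 𝒞 C Y₁) (h2 : IsMRS 𝒞 C Y₂) (hne : Y₁ ≠ Y₂) :
    Y₁ ∩ Y₂ = ∅ := by
  obtain ⟨hne1, hsub1, hmem1, hmin1⟩ := h1
  obtain ⟨hne2, hsub2, hmem2, hmin2⟩ := h2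
  have hss : C \ Y₁ ⊂ C := by
    constructor
    · exact diff_subset
    · intro h
      obtain ⟨x, hx⟩ := hne1
      exact (h (hsub1 hx)).2 hx
  rcases hSD C hC (C \ Y₁) hmem1 hss Y₂ ⟨hne2, hsub2, hmem2, hmin2⟩ with h | h
  · ext x
    simp only [mem_inter_iff, mem_empty_iff_false, iff_false, not_and]
    intro hx1 hx2
    exact (h hx2).2 hx1
  · -- Y₂ ∩ (C \ Y₁) = ∅ means Y₂ ⊆ Y₁
    have hsub : Y₂ ⊆ Y₁ := by
      intro x hx
      by_contra hxn
      have : x ∈ Y₂ ∩ (C \ Y₁) := ⟨hx, hsub2 hx, hxn⟩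
      rw [h] at this
      exact this
    have : Y₂ = Y₁ := by
      by_contra hne'
      exact hmin1 Y₂ hne2 (ssubset_of_subset_of_ne hsub hne') hmem2
    exact absurd this.symm hne
end

section
/- For any set system (V, C) and components C, C' ∈ C with C' ⊊ C, there exists an MRS-sequence between C and C', i.e., a partition (Y₁, ..., Y_ℓ) of C \ C' such that for every i ∈ [1, ℓ], the set C' ∪ Y₁ ∪ ... ∪ Y_i is a component and Y_i is a minimal removable set of C' ∪ Y₁ ∪ ... ∪ Y_i. -/
open Set

lemma exists_mrs_in_diff {α : Type*} [Fintype α] (𝒞 : Set (Set α)) (C C' : Set α)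
    (hC : C ∈ 𝒞) (hC' : C' ∈ 𝒞) (hss : C' ⊂ C) :
    ∃ Y, Y ⊆ C \ C' ∧ IsMRS 𝒞 C Y := by
  set S : Set (Set α) := {Y | Y.Nonempty ∧ Y ⊆ C \ C' ∧ C \ Y ∈ 𝒞} with hS
  have hne : (C \ C' : Set α) ∈ S := by
    refine ⟨diff_nonempty.mpr hss.not_subset, Subset.rfl, ?_⟩
    rw [diff_diff_cancel_left hss.subset]; exact hC'
  obtain ⟨Y, hYS, hmin⟩ := (Finite.to_wellFoundedLT (α := Set α)).wf.has_min S ⟨_, hne⟩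
  refine ⟨Y, hYS.2.1, hYS.1, hYS.2.1.trans diff_subset, hYS.2.2, ?_⟩
  intro Z hZne hZY hZ
  exact hmin Z ⟨hZne, hZY.subset.trans hYS.2.1, hZ⟩ hZY

lemma key {α : Type*} [Fintype α] (𝒞 : Set (Set α)) :
    ∀ n (C C' : Set α), (C \ C').ncard ≤ n → C ∈ 𝒞 → C' ∈ 𝒞 → C' ⊂ C →
    ∃ (ℓ : ℕ) (Ys : Fin ℓ → Set α),
      (∀ i, (Ys i).Nonempty) ∧
      (∀ i j, i ≠ j → Ys i ∩ Ys j = ∅) ∧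
      (⋃ i, Ys i) = C \ C' ∧
      ∀ i : Fin ℓ,
        (C' ∪ ⋃ j : Fin ℓ, ⋃ _ : j ≤ i, Ys j) ∈ 𝒞 ∧
        IsMRS 𝒞 (C' ∪ ⋃ j : Fin ℓ, ⋃ _ : j ≤ i, Ys j) (Ys i) := by
  intro n
  induction n with
  | zero =>
    intro C C' hcard hC hC' hss
    have hne : (C \ C').Nonempty := diff_nonempty.mpr hss.not_subset
    have := (C \ C').toFinite
    have : 0 < (C \ C').ncard := Set.ncard_pos this |>.mpr hne
    omega
  | succ n ih =>
    intro C C' hcard hC hC' hss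
    obtain ⟨Y, hYsub, hMRS⟩ := exists_mrs_in_diff 𝒞 C C' hC hC' hss
    obtain ⟨hYne, hYC, hCY, hminY⟩ := hMRS
    have hC'sub : C' ⊆ C \ Y := by
      intro x hx
      exact ⟨hss.subset hx, fun hxY => (hYsub hxY).2 hx⟩
    by_cases heq : C \ Y = C'
    · -- one step
      have hYeq : Y = C \ C' := by
        rw [← heq, diff_diff_cancel_left hYC]
      refine ⟨1, fun _ => Y, fun _ => hYne, ?_, ?_, ?_⟩
      · intro i j hij; exact absurd (Subsingleton.elim i j) hij
      · simp [hYeq, iUnion_const]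
      · intro i
        have hU : (C' ∪ ⋃ j : Fin 1, ⋃ _ : j ≤ i, Y) = C := by
          have : (⋃ j : Fin 1, ⋃ _ : j ≤ i, Y) = Y := by
            apply subset_antisymm
            · exact iUnion_subset fun j => iUnion_subset fun _ => Subset.rfl
            · intro x hx
              exact mem_iUnion.mpr ⟨i, mem_iUnion.mpr ⟨le_refl i, hx⟩⟩
          rw [this, hYeq, union_diff_cancel hss.subset]
        rw [hU]
        exact ⟨hC, hYne, hYC, hCY, hminY⟩
    · have hss2' : C' ⊂ C \ Y := lt_of_le_of_ne hC'sub (fun h => heq h.symm)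
      have hdiff : (C \ Y) \ C' = (C \ C') \ Y := by
        rw [diff_diff_comm]
      have hlt : ((C \ Y) \ C').ncard ≤ n := by
        have hstrict : (C \ Y) \ C' ⊂ C \ C' := by
          rw [hdiff]
          refine ⟨diff_subset, fun h => ?_⟩
          obtain ⟨y, hy⟩ := hYne
          have := h (hYsub hy)
          exact this.2 hy
        have := Set.ncard_lt_ncard hstrict (toFinite _)
        omega
      obtain ⟨ℓ, Ys, h1, h2, h3, h4⟩ := ih (C \ Y) C' hlt hCY hC' hss2'
      set Ys' : Fin (ℓ + 1) → Set α := Fin.snoc Ys Y with hYs'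
      have hsnocL : Ys' (Fin.last ℓ) = Y := Fin.snoc_last _ _
      have hsnocC : ∀ j : Fin ℓ, Ys' j.castSucc = Ys j := fun j => Fin.snoc_castSucc _ _ _
      have hYsSub : ∀ j : Fin ℓ, Ys j ⊆ (C \ Y) \ C' := by
        intro j
        rw [← h3]; exact subset_iUnion _ j
      refine ⟨ℓ + 1, Ys', ?_, ?_, ?_, ?_⟩
      · intro i
        cases i using Fin.lastCases with
        | last => rw [hsnocL]; exact hYne
        | cast j => rw [hsnocC]; exact h1 j
      · intro i j hij
        cases i using Fin.lastCases with
        | last =>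
          cases j using Fin.lastCases with
          | last => exact absurd rfl hij
          | cast j' =>
            rw [hsnocL, hsnocC]
            ext x
            simp only [mem_inter_iff, mem_empty_iff_false, iff_false, not_and]
            intro hx hx'
            exact (hYsSub j' hx').1.2 hx
        | cast i' =>
          cases j using Fin.lastCases with
          | last =>
            rw [hsnocL, hsnocC]
            ext x
            simp only [mem_inter_iff, mem_empty_iff_false, iff_false, not_and]
            intro hx hx'
            exact (hYsSub i' hx).1.2 hx'
          | cast j' =>
            rw [hsnocC, hsnocC]
            exact h2 i' j' (fun h => hij (by rw [h]))
      · apply subset_antisymm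
        · apply iUnion_subset
          intro i
          cases i using Fin.lastCases with
          | last => rw [hsnocL]; exact hYsub
          | cast j =>
            rw [hsnocC]
            exact (hYsSub j).trans (by rw [hdiff]; exact diff_subset)
        · intro x hx
          by_cases hxY : x ∈ Y
          · exact mem_iUnion.mpr ⟨Fin.last ℓ, hsnocL ▸ hxY⟩
          · have : x ∈ (C \ Y) \ C' := by rw [hdiff]; exact ⟨hx, hxY⟩
            rw [← h3] at this
            obtain ⟨j, hj⟩ := mem_iUnion.mp this
            exact mem_iUnion.mpr ⟨j.castSucc, (hsnocC j) ▸ hj⟩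
      · intro i
        cases i using Fin.lastCases with
        | last =>
          have hUall : (⋃ j : Fin (ℓ+1), ⋃ _ : j ≤ Fin.last ℓ, Ys' j) = ⋃ j, Ys' j := by
            apply subset_antisymm
            · exact iUnion_subset fun j => iUnion_subset fun _ => subset_iUnion _ j
            · exact iUnion_mono fun j => by
                intro x hx; exact mem_iUnion.mpr ⟨Fin.le_last j, hx⟩
          have hunion : (⋃ j, Ys' j) = C \ C' := by
            apply subset_antisymm
            · apply iUnion_subset
              intro i
              cases i using Fin.lastCases with
              | last => rw [hsnocL]; exact hYsub
              | cast j =>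
                rw [hsnocC]
                exact (hYsSub j).trans (by rw [hdiff]; exact diff_subset)
            · intro x hx
              by_cases hxY : x ∈ Y
              · exact mem_iUnion.mpr ⟨Fin.last ℓ, hsnocL ▸ hxY⟩
              · have : x ∈ (C \ Y) \ C' := by rw [hdiff]; exact ⟨hx, hxY⟩
                rw [← h3] at this
                obtain ⟨j, hj⟩ := mem_iUnion.mp this
                exact mem_iUnion.mpr ⟨j.castSucc, (hsnocC j) ▸ hj⟩
          have hU : (C' ∪ ⋃ j : Fin (ℓ+1), ⋃ _ : j ≤ Fin.last ℓ, Ys' j) = C := by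
            rw [hUall, hunion, union_diff_cancel hss.subset]
          rw [hU, hsnocL]
          exact ⟨hC, hYne, hYC, hCY, hminY⟩
        | cast i' =>
          have hUeq : (⋃ j : Fin (ℓ+1), ⋃ _ : j ≤ i'.castSucc, Ys' j)
              = ⋃ j : Fin ℓ, ⋃ _ : j ≤ i', Ys j := by
            ext x
            simp only [mem_iUnion]
            constructor
            · rintro ⟨j, hj, hx⟩
              have hjle : (j : ℕ) ≤ (i' : ℕ) := by exact_mod_cast hj
              have hjlt : (j : ℕ) < ℓ := lt_of_le_of_lt hjle i'.isLt
              refine ⟨⟨j, hjlt⟩, hjle, ?_⟩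
              have hje : j = (⟨(j : ℕ), hjlt⟩ : Fin ℓ).castSucc := by
                apply Fin.ext; rfl
              rw [hje, hsnocC] at hx
              exact hx
            · rintro ⟨j, hj, hx⟩
              exact ⟨j.castSucc, by simpa using hj, (hsnocC j).symm ▸ hx⟩
          rw [hUeq]
          exact ⟨(h4 i').1, (hsnocC i') ▸ (h4 i').2⟩

theorem stmt4 {α : Type*} [Fintype α] (𝒞 : Set (Set α)) (C C' : Set α)
    (hC : C ∈ 𝒞) (hC' : C' ∈ 𝒞) (hss : C' ⊂ C) :
    ∃ (ℓ : ℕ) (Ys : Fin ℓ → Set α),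
      (∀ i, (Ys i).Nonempty) ∧
      (∀ i j, i ≠ j → Ys i ∩ Ys j = ∅) ∧
      (⋃ i, Ys i) = C \ C' ∧
      ∀ i : Fin ℓ,
        (C' ∪ ⋃ j : Fin ℓ, ⋃ _ : j ≤ i, Ys j) ∈ 𝒞 ∧
        IsMRS 𝒞 (C' ∪ ⋃ j : Fin ℓ, ⋃ _ : j ≤ i, Ys j) (Ys i) := by
  exact key 𝒞 ((C \ C').ncard) C C' le_rfl hC hC' hss
end

section
/- For a simple undirected 2-edge-connected graph G, the set system (V(G), C_e), where C_e is the family of vertex subsets of size > 1 inducing 2-edge-connected subgraphs, has subset-disjoint (SD) property: for any C, C' ∈ C_e with C' ⊊ C and any minimal removable set Y of C, either Y ⊆ C' or Y ∩ C' = ∅. -/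
open Set

/-- A graph is 2-edge-connected: connected and has no bridge. -/
def TwoEC {V : Type*} (H : SimpleGraph V) : Prop :=
  H.Connected ∧ ∀ e : Sym2 V, ¬ H.IsBridge e

/-- A graph is 2-vertex-connected: more than 2 vertices and removing any vertex keeps it connected. -/
def TwoVC {V : Type*} (H : SimpleGraph V) : Prop :=
  2 < Nat.card V ∧ ∀ v : V, (H.induce ({v}ᶜ : Set V)).Connected

/-- Family of vertex subsets of size `> 1` inducing 2-edge-connected subgraphs. -/
def Ce {V : Type*} (G : SimpleGraph V) : Set (Set V) :=
  {C | TwoEC (G.induce C) ∧ 1 < C.ncard}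

/-- Family of vertex subsets inducing 2-vertex-connected subgraphs. -/
def Cv {V : Type*} (G : SimpleGraph V) : Set (Set V) :=
  {C | TwoVC (G.induce C)}

/-- Degree of `v` in the induced subgraph `G[C]`. -/
noncomputable def degIn {V : Type*} (G : SimpleGraph V) (C : Set V) (v : V) : ℕ :=
  (G.neighborSet v ∩ C).ncard

/-- `P` is a two-deg path in `G[C]`: all vertices of degree 2, inducing a connected subgraph. -/
def TwoDegPath {V : Type*} (G : SimpleGraph V) (C P : Set V) : Prop :=
  P ⊆ C ∧ (∀ u ∈ P, degIn G C u = 2) ∧ (G.induce P).Connected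

/-- `P` is a maximal two-deg path in `G[C]`. -/
def MaxTwoDegPath {V : Type*} (G : SimpleGraph V) (C P : Set V) : Prop :=
  TwoDegPath G C P ∧ ∀ P' : Set V, TwoDegPath G C P' → P ⊆ P' → P' = P

/-- `Y` is a candidate of `C`: a maximal two-deg path or a singleton of a vertex of degree `> 2`. -/
def Can {V : Type*} (G : SimpleGraph V) (C Y : Set V) : Prop :=
  MaxTwoDegPath G C Y ∨ ∃ v ∈ C, 2 < degIn G C v ∧ Y = {v}

/-- A graph is a cycle: connected and every vertex has exactly two neighbours. -/
def IsCycleGraph {W : Type*} (H : SimpleGraph W) : Prop :=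
  H.Connected ∧ ∀ v : W, (H.neighborSet v).ncard = 2

/-- `S` is a maximal subset of `C` inducing a 2-vertex-connected subgraph. -/
def IsMaxVComp {V : Type*} (G : SimpleGraph V) (C S : Set V) : Prop :=
  S ⊆ C ∧ TwoVC (G.induce S) ∧ ∀ S' : Set V, S ⊆ S' → S' ⊆ C → TwoVC (G.induce S') → S' = S

/-!
Two ways of enlarging `C \ Y` inside `C` keep it in `C_e`: gluing on a 2-edge-connected set that
meets it, and adding an ear, a trail outside it attached by two distinct edges. If `C'` meets both
`Y` and `C \ Y`, gluing `C'` and minimality of `Y` give `Y ⊆ C'`. And `C' ⊆ Y` is impossible: two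
distinct edges of `G[C]` leave a component of `G[Y]` meeting `C'`, a shortest path of `G[Y]`
between their ends is an ear, so by minimality it covers `Y`; being shortest it has no chord, so
`G[Y]` is a path, which is acyclic and cannot contain the 2-edge-connected `G[C']`.
-/

lemma IsMRS.subset_of_union_mem {α : Type*} {𝒞 : Set (Set α)} {C Y Z : Set α}
    (hY : IsMRS 𝒞 C Y) (hZC : Z ⊆ C) (hYZ : (Y ∩ Z).Nonempty) (hZ : C \ Y ∪ Z ∈ 𝒞) : Y ⊆ Z := by
  by_contra hYZ'
  refine hY.2.2.2 (Y \ Z) (Set.sdiff_nonempty.mpr hYZ') ⟨Set.sdiff_subset, fun hY' ↦ ?_⟩ ?_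
  · obtain ⟨x, hxY, hxZ⟩ := hYZ
    exact (hY' hxY).2 hxZ
  · rwa [Set.sdiff_sdiff_right, Set.inter_eq_right.mpr hZC]

namespace SimpleGraph

variable {V : Type*} {G : SimpleGraph V} {S T : Set V} {u v : V}

@[simp]
lemma spanningCoe_induce_adj : (G.induce S).spanningCoe.Adj u v ↔ G.Adj u v ∧ u ∈ S ∧ v ∈ S := by
  simp only [map_adj, comap_adj, Function.Embedding.subtype_apply, Subtype.exists]
  constructor
  · rintro ⟨a, ha, b, hb, hab, rfl, rfl⟩
    exact ⟨hab, ha, hb⟩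
  · rintro ⟨huv, hu, hv⟩
    exact ⟨u, hu, v, hv, huv, rfl, rfl⟩

lemma spanningCoe_induce_mono (h : S ⊆ T) :
    (G.induce S).spanningCoe ≤ (G.induce T).spanningCoe := fun _ _ huv ↦ by
  simp only [spanningCoe_induce_adj] at huv ⊢
  exact ⟨huv.1, h huv.2.1, h huv.2.2⟩

lemma Walk.support_subset_of_spanningCoe {H : SimpleGraph S} (w : H.spanningCoe.Walk u v)
    (hu : u ∈ S) : ∀ x ∈ w.support, x ∈ S := by
  induction w with
  | nil => simpa
  | cons h w ih =>
    obtain ⟨a, b, -, rfl, rfl⟩ := (map_adj _ _ _ _).mp h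
    intro x hx
    rw [Walk.support_cons, List.mem_cons] at hx
    exact hx.elim (· ▸ hu) (ih b.2 x)

lemma reachable_spanningCoe_iff {H : SimpleGraph S} {u v : S} :
    H.spanningCoe.Reachable u v ↔ H.Reachable u v := by
  refine ⟨fun ⟨w⟩ ↦ ?_, fun h ↦ h.map (Embedding.map _ H).toHom⟩
  have := (w.induce S (w.support_subset_of_spanningCoe u.2)).reachable
  rwa [induce_spanningCoe] at this

lemma spanningCoe_deleteEdges {H : SimpleGraph S} (s : Set (Sym2 V)) :
    H.spanningCoe.deleteEdges s = (H.deleteEdges (Sym2.map (↑) ⁻¹' s)).spanningCoe := by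
  ext x y
  simp only [deleteEdges_adj, map_adj, Set.mem_preimage, Sym2.map_mk,
    Function.Embedding.subtype_apply]
  constructor
  · rintro ⟨⟨a, b, hab, rfl, rfl⟩, hs⟩
    exact ⟨a, b, ⟨hab, hs⟩, rfl, rfl⟩
  · rintro ⟨a, b, ⟨hab, hs⟩, rfl, rfl⟩
    exact ⟨⟨a, b, hab, rfl, rfl⟩, hs⟩

lemma isEdgeReachable_spanningCoe_iff {H : SimpleGraph S} {k : ℕ} {u v : S} :
    H.spanningCoe.IsEdgeReachable k u v ↔ H.IsEdgeReachable k u v := by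
  have hinj : Function.Injective (Sym2.map ((↑) : S → V)) :=
    Sym2.map.injective Subtype.val_injective
  refine ⟨fun h t ht ↦ ?_, fun h s hs ↦ ?_⟩
  · have := h (s := Sym2.map (↑) '' t) (by rwa [hinj.encard_image])
    rwa [spanningCoe_deleteEdges, hinj.preimage_image, reachable_spanningCoe_iff] at this
  · rw [spanningCoe_deleteEdges, reachable_spanningCoe_iff]
    refine h (lt_of_le_of_lt ?_ hs)
    rw [← hinj.encard_image]
    exact Set.encard_le_encard (Set.image_preimage_subset _ _)

/-- `(G.induce S).spanningCoe` is `G[S]` as a graph on all of `V`, so that the induced subgraphs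
of different vertex sets live on one vertex type and can be compared. -/
def IsEdgeConnectedOn (G : SimpleGraph V) (k : ℕ) (S : Set V) : Prop :=
  ∀ ⦃u⦄, u ∈ S → ∀ ⦃v⦄, v ∈ S → (G.induce S).spanningCoe.IsEdgeReachable k u v

lemma isEdgeConnectedOn_iff {k : ℕ} :
    G.IsEdgeConnectedOn k S ↔ (G.induce S).IsEdgeConnected k :=
  ⟨fun h u v ↦ isEdgeReachable_spanningCoe_iff.mp (h u.2 v.2),
    fun h u hu v hv ↦ isEdgeReachable_spanningCoe_iff.mpr (h ⟨u, hu⟩ ⟨v, hv⟩)⟩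

lemma IsEdgeConnectedOn.union {k : ℕ} (hS : G.IsEdgeConnectedOn k S)
    (hT : G.IsEdgeConnectedOn k T) (hST : (S ∩ T).Nonempty) : G.IsEdgeConnectedOn k (S ∪ T) := by
  obtain ⟨x, hxS, hxT⟩ := hST
  have hx : ∀ ⦃u⦄, u ∈ S ∪ T → (G.induce (S ∪ T)).spanningCoe.IsEdgeReachable k u x := by
    rintro u (hu | hu)
    · exact (hS hu hxS).mono (spanningCoe_induce_mono Set.subset_union_left)
    · exact (hT hu hxT).mono (spanningCoe_induce_mono Set.subset_union_right)
  exact fun u hu v hv ↦ (hx hu).trans (hx hv).symm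

lemma IsEdgeConnectedOn.exists_adj_ne (hS : G.IsEdgeConnectedOn 2 S) {Q : Set V} (hQS : Q ⊆ S)
    (hu : u ∈ Q) (hv : v ∈ S \ Q) (e : Sym2 V) :
    ∃ x ∈ Q, ∃ y ∈ S \ Q, G.Adj x y ∧ s(x, y) ≠ e := by
  obtain ⟨w⟩ := isEdgeReachable_two.mp (hS (hQS hu) hv.1) e
  obtain ⟨⟨⟨x, y⟩, hxy⟩, -, hx, hy⟩ := w.exists_boundary_dart Q hu hv.2
  simp only [deleteEdges_adj, spanningCoe_induce_adj, Set.mem_singleton_iff] at hxy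
  exact ⟨x, hx, y, ⟨hxy.1.2.2, hy⟩, hxy.1.1, hxy.2⟩

lemma Walk.mem_edgeSet_spanningCoe_induce (w : G.Walk u v) (hw : ∀ x ∈ w.support, x ∈ S)
    {e : Sym2 V} (he : e ∈ w.edges) : e ∈ (G.induce S).spanningCoe.edgeSet := by
  induction e with
  | h x y =>
    exact spanningCoe_induce_adj.mpr ⟨w.adj_of_mem_edges he,
      hw _ (w.fst_mem_support_of_mem_edges he), hw _ (w.snd_mem_support_of_mem_edges he)⟩

lemma IsEdgeConnectedOn.union_support {A : Set V} (hA : G.IsEdgeConnectedOn 2 A)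
    {y₁ y₂ a₁ a₂ : V} {p : G.Walk y₁ y₂} (hp : p.IsTrail) (hpA : ∀ x ∈ p.support, x ∉ A)
    (ha₁ : a₁ ∈ A) (ha₂ : a₂ ∈ A) (h₁ : G.Adj y₁ a₁) (h₂ : G.Adj y₂ a₂)
    (hne : s(y₁, a₁) ≠ s(y₂, a₂)) : G.IsEdgeConnectedOn 2 (A ∪ {x | x ∈ p.support}) := by
  set T := A ∪ {x | x ∈ p.support}
  let w : G.Walk a₁ a₂ := .cons h₁.symm (p.concat h₂)
  have hw_support : ∀ x, x ∈ w.support ↔ x = a₁ ∨ x ∈ p.support ∨ x = a₂ := by simp [w]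
  have hwT : ∀ x ∈ w.support, x ∈ T := by
    intro x hx
    rcases (hw_support x).mp hx with rfl | hx | rfl
    exacts [Or.inl ha₁, Or.inr hx, Or.inl ha₂]
  have hw : w.IsTrail := by
    have h₁p : s(y₁, a₁) ∉ p.edges := fun h ↦ hpA _ (p.snd_mem_support_of_mem_edges h) ha₁
    have h₂p : s(y₂, a₂) ∉ p.edges := fun h ↦ hpA _ (p.snd_mem_support_of_mem_edges h) ha₂
    refine (Walk.isTrail_cons _ _).mpr ⟨?_, ?_⟩
    · rw [Walk.isTrail_def, Walk.edges_concat, List.concat_eq_append, List.nodup_append]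
      simpa using ⟨hp.edges_nodup, fun e he h ↦ h₂p (h ▸ he)⟩
    · rw [Walk.edges_concat, List.concat_eq_append, List.mem_append, List.mem_singleton,
        Sym2.eq_swap]
      exact not_or.mpr ⟨h₁p, hne⟩
  let w' := w.transfer _ fun _ ↦ w.mem_edgeSet_spanningCoe_induce hwT
  have hw' : w'.IsTrail := by
    rw [Walk.isTrail_def, Walk.edges_transfer]
    exact hw.edges_nodup
  have hends := (hA ha₁ ha₂).mono (spanningCoe_induce_mono (T := T) Set.subset_union_left)
  have ha : ∀ ⦃x⦄, x ∈ T → (G.induce T).spanningCoe.IsEdgeReachable 2 x a₁ := by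
    rintro x (hx | hx)
    · exact (hA hx ha₁).mono (spanningCoe_induce_mono Set.subset_union_left)
    · refine hw'.isEdgeReachable_two_of_isEdgeReachable_two hends ?_ (Walk.start_mem_support _)
      rw [Walk.support_transfer, hw_support]
      exact Or.inr (Or.inl hx)
  exact fun u hu v hv ↦ (ha hu).trans (ha hv).symm

lemma Walk.isChordless_of_length_eq_dist {p : G.Walk u v} (hp : p.length = G.dist u v) :
    p.IsChordless := by
  classical
  induction p with
  | nil =>
    rw [Walk.isChordless_iff_forall_mem_edges]
    intro x z hx hz hxz
    simp only [Walk.support_nil, List.mem_singleton] at hx hz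
    exact absurd (hx ▸ hz ▸ hxz) (G.loopless.irrefl _)
  | @cons u c v h q ih =>
    have hq : q.length = G.dist c v := by
      obtain ⟨r, hr⟩ := q.reachable.exists_walk_length_eq_dist
      have hr' := G.dist_le (r.cons h)
      have hq' := G.dist_le q
      rw [Walk.length_cons] at hp hr'
      omega
    have hstart : ∀ ⦃z⦄, z ∈ q.support → G.Adj u z → s(u, z) ∈ (q.cons h).edges := by
      intro z hz huz
      by_cases hcz : c = z
      · simp [hcz]
      have hsplit := congrArg Walk.length (q.take_spec hz)
      have htake : (q.takeUntil z hz).length ≠ 0 := fun h0 ↦ hcz (Walk.eq_of_length_eq_zero h0)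
      have hshort := G.dist_le ((q.dropUntil z hz).cons huz)
      simp only [Walk.length_append, Walk.length_cons] at hsplit hp hshort
      omega
    rw [Walk.isChordless_iff_forall_mem_edges]
    intro x z hx hz hxz
    rw [Walk.support_cons, List.mem_cons] at hx hz
    rcases hx with rfl | hx <;> rcases hz with rfl | hz
    · exact absurd hxz (G.loopless.irrefl _)
    · exact hstart hz hxz
    · rw [Sym2.eq_swap]; exact hstart hx hxz.symm
    · exact List.mem_cons_of_mem _ ((ih hq).mem_edges hx hz hxz)

lemma Walk.IsPath.isAcyclic_fromEdgeSet {p : G.Walk u v} (hp : p.IsPath) :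
    (fromEdgeSet {e | e ∈ p.edges}).IsAcyclic := by
  induction p with
  | nil => simp
  | @cons u c v h q ih =>
    rw [Walk.cons_isPath_iff] at hp
    have hunreach : ¬ (fromEdgeSet {e | e ∈ q.edges}).Reachable u c := by
      rintro ⟨r⟩
      cases r with
      | nil => exact h.ne rfl
      | cons hr _ =>
        rw [fromEdgeSet_adj] at hr
        exact hp.2 (q.fst_mem_support_of_mem_edges hr.1)
    have hedges :
        fromEdgeSet {e | e ∈ (q.cons h).edges} = fromEdgeSet {e | e ∈ q.edges} ⊔ edge u c := by
      rw [edge, ← fromEdgeSet_union]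
      congr 1
      ext e
      simp
    rw [hedges, isAcyclic_add_edge_iff_of_not_reachable _ _ hunreach]
    exact ih hp.1

lemma IsEdgeConnectedOn.not_isAcyclic (hS : G.IsEdgeConnectedOn 2 S) (hS₁ : 1 < S.ncard) :
    ¬ (G.induce S).spanningCoe.IsAcyclic := by
  intro hacyc
  obtain ⟨u, v, hu, hv, huv⟩ :=
    (Set.one_lt_ncard_iff (Set.finite_of_ncard_pos (by omega))).mp hS₁
  obtain ⟨w, huw, hw⟩ := exists_adj_isEdgeReachable_two huv (hS hu hv)
  exact (isAcyclic_iff_forall_adj_isBridge.mp hacyc huw).not_isEdgeReachable_two hw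

end SimpleGraph

section

open SimpleGraph

variable {V : Type*} {G : SimpleGraph V} {C Y : Set V}

lemma twoEC_iff {W : Type*} {H : SimpleGraph W} : TwoEC H ↔ Nonempty W ∧ H.IsEdgeConnected 2 := by
  refine ⟨fun ⟨hconn, hbr⟩ ↦ ⟨hconn.nonempty, fun u v ↦ isEdgeReachable_two.mpr fun e ↦ ?_⟩,
    fun ⟨_, h⟩ ↦ ⟨h.connected two_ne_zero, fun e he ↦ ?_⟩⟩
  · induction e with
    | h x y => exact (hconn.connected_delete_edge_of_not_isBridge (hbr s(x, y))).preconnected u v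
  · induction e with
    | h x y => exact he.not_isEdgeReachable_two (h x y)

lemma mem_Ce_iff {S : Set V} : S ∈ Ce G ↔ G.IsEdgeConnectedOn 2 S ∧ 1 < S.ncard := by
  rw [Ce, Set.mem_ofPred_eq, twoEC_iff, isEdgeConnectedOn_iff]
  refine ⟨fun ⟨⟨_, h⟩, hS⟩ ↦ ⟨h, hS⟩, fun ⟨h, hS⟩ ↦ ⟨⟨?_, h⟩, hS⟩⟩
  exact (Set.nonempty_of_ncard_ne_zero (by omega)).to_subtype

lemma IsMRS.subset_of_isEdgeConnectedOn {Z : Set V} (hC : C ∈ Ce G)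
    (hY : IsMRS (Ce G) C Y) (hZC : Z ⊆ C) (hYZ : (Y ∩ Z).Nonempty)
    (hZ : G.IsEdgeConnectedOn 2 (C \ Y ∪ Z)) : Y ⊆ Z := by
  refine hY.subset_of_union_mem hZC hYZ (mem_Ce_iff.mpr ⟨hZ, ?_⟩)
  have hCfin : C.Finite := Set.finite_of_ncard_pos (by have := hC.2; omega)
  exact (mem_Ce_iff.mp hY.2.2.1).2.trans_le <| Set.ncard_le_ncard Set.subset_union_left <|
    hCfin.subset (Set.union_subset Set.sdiff_subset hZC)

lemma IsMRS.not_subset_of_mem_Ce {C' : Set V} (hC : C ∈ Ce G) (hY : IsMRS (Ce G) C Y)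
    (hC' : C' ∈ Ce G) : ¬ C' ⊆ Y := by
  intro hC'Y
  obtain ⟨hC₂, -⟩ := mem_Ce_iff.mp hC
  obtain ⟨hA₂, hA₁⟩ := mem_Ce_iff.mp hY.2.2.1
  obtain ⟨hC'₂, hC'₁⟩ := mem_Ce_iff.mp hC'
  obtain ⟨y₀, hy₀⟩ := Set.nonempty_of_ncard_ne_zero (s := C') (by omega)
  obtain ⟨a₀, ha₀⟩ := Set.nonempty_of_ncard_ne_zero (s := C \ Y) (by omega)
  set Q := {x | x ∈ Y ∧ (G.induce Y).spanningCoe.Reachable y₀ x}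
  have hleave : ∀ e, ∃ y ∈ Q, ∃ a ∈ C \ Y, G.Adj y a ∧ s(y, a) ≠ e := by
    intro e
    obtain ⟨y, hy, a, ⟨haC, haQ⟩, hya, hne⟩ := hC₂.exists_adj_ne (Q := Q)
      (fun x hx ↦ hY.2.1 hx.1) ⟨hC'Y hy₀, .rfl⟩ ⟨ha₀.1, fun h ↦ ha₀.2 h.1⟩ e
    refine ⟨y, hy, a, ⟨haC, fun haY ↦ haQ ⟨haY, hy.2.trans ?_⟩⟩, hya, hne⟩
    exact (spanningCoe_induce_adj.mpr ⟨hya, hy.1, haY⟩).reachable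
  obtain ⟨y₁, hy₁, a₁, ha₁, h₁, -⟩ := hleave s(y₀, y₀)
  obtain ⟨y₂, hy₂, a₂, ha₂, h₂, hne⟩ := hleave s(y₁, a₁)
  obtain ⟨q, hq, hqlen⟩ := (hy₁.2.symm.trans hy₂.2).exists_path_of_dist
  have hqY : ∀ x ∈ q.support, x ∈ Y := q.support_subset_of_spanningCoe hy₁.1
  have hYq : Y ⊆ {x | x ∈ q.support} := by
    refine hY.subset_of_isEdgeConnectedOn hC (fun x hx ↦ hY.2.1 (hqY x hx))
      ⟨y₁, hy₁.1, q.start_mem_support⟩ ?_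
    have hq' := (hq.mapLe (G.spanningCoe_induce_le Y)).isTrail
    rw [← Walk.support_mapLe_eq_support (G.spanningCoe_induce_le Y)]
    refine hA₂.union_support hq' (fun x hx hxA ↦ hxA.2 (hqY x ?_)) ha₁ ha₂ h₁ h₂ hne.symm
    rwa [Walk.support_mapLe_eq_support] at hx
  have hC'q : (G.induce C').spanningCoe ≤ fromEdgeSet {e | e ∈ q.edges} := by
    intro x z hxz
    rw [spanningCoe_induce_adj] at hxz
    have hxzY : (G.induce Y).spanningCoe.Adj x z := spanningCoe_induce_adj.mpr
      ⟨hxz.1, hC'Y hxz.2.1, hC'Y hxz.2.2⟩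
    exact ⟨(Walk.isChordless_of_length_eq_dist hqlen).mem_edges
      (hYq (hC'Y hxz.2.1)) (hYq (hC'Y hxz.2.2)) hxzY, hxz.1.ne⟩
  exact hC'₂.not_isAcyclic hC'₁ (hq.isAcyclic_fromEdgeSet.anti hC'q)

end

theorem stmt9_general {V : Type*} (G : SimpleGraph V) :
    SDProperty (Ce G) := by
  intro C hC C' hC' hC'C Y hY
  obtain ⟨x, hxC', hxY⟩ := Set.not_subset.mp (hY.not_subset_of_mem_Ce hC hC')
  rcases (Y ∩ C').eq_empty_or_nonempty with hYC' | hYC'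
  · exact Or.inr hYC'
  · refine Or.inl (hY.subset_of_isEdgeConnectedOn hC hC'C.1 hYC' ?_)
    exact (mem_Ce_iff.mp hY.2.2.1).1.union (mem_Ce_iff.mp hC').1 ⟨x, ⟨hC'C.1 hxC', hxY⟩, hxC'⟩

theorem stmt9 {V : Type*} [Fintype V] (G : SimpleGraph V) (hG : TwoEC G) :
    SDProperty (Ce G) :=
  stmt9_general G
end

section
/- For a simple undirected 2-vertex-connected graph G, the set system (V(G), C_v), where C_v is the family of vertex subsets inducing 2-vertex-connected subgraphs, has subset-disjoint (SD) property: for any C, C' ∈ C_v with C' ⊊ C and any minimal removable set Y of C, either Y ⊆ C' or Y ∩ C' = ∅. -/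
/-!
Let `Y` be a minimal removable set of `C` and `A = C \ Y`. Adding to the 2-connected set `A` the
vertices of any path joining two vertices of `A` keeps it 2-connected, so by minimality every ear
of `A` in `C` (such a path leaving `A`) passes through all of `Y`. A shortest ear admits no
shortcut, neither along a chord nor through a further neighbour in `A`; hence, when `Y` has at least
two vertices, `Y` is the interior of a chordless ear and all its vertices have degree 2 in `G[C]`.
If a 2-connected `C' ⊊ C` met `Y` without containing it, an edge of `G[Y]` would leave `C'` at a
vertex `u ∈ C'`; but `u` has two neighbours in `C'`, which are then all its neighbours in `C`.
-/

open Set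

theorem Set.exists_ne_ne_of_two_lt_ncard {α : Type*} {s : Set α} (hs : 2 < s.ncard) (a b : α) :
    ∃ r ∈ s, r ≠ a ∧ r ≠ b := by
  by_contra! h
  have hsub : s ⊆ {a, b} := fun r hr => by
    by_cases hra : r = a
    · exact Or.inl hra
    · exact Or.inr (h r hr hra)
  have := (ncard_le_ncard hsub).trans ((ncard_insert_le a {b}).trans (by rw [ncard_singleton]))
  omega

theorem IsMRS.subset_or_disjoint {α : Type*} {𝒞 : Set (Set α)} {C Y B : Set α}
    (hY : IsMRS 𝒞 C Y) (hB : B ∈ 𝒞) (hCYB : C \ Y ⊆ B) (hBC : B ⊆ C) :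
    Y ⊆ B ∨ Disjoint Y B := by
  obtain ⟨-, -, -, hmin⟩ := hY
  by_contra! h
  refine hmin (Y \ B) (sdiff_nonempty.2 h.1)
    ⟨sdiff_subset, fun hsub => h.2 (subset_sdiff.1 hsub).2⟩ ?_
  rwa [sdiff_sdiff_right, inter_eq_right.2 hBC, union_eq_right.2 hCYB]

namespace SimpleGraph

variable {V : Type*} {G : SimpleGraph V}

theorem exists_adj_of_connected_induce {S T : Set V} (hS : (G.induce S).Connected) {x y : V}
    (hxS : x ∈ S) (hyS : y ∈ S) (hxT : x ∈ T) (hyT : y ∉ T) :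
    ∃ u ∈ S ∩ T, ∃ w ∈ S \ T, G.Adj u w := by
  obtain ⟨p⟩ := hS.preconnected ⟨x, hxS⟩ ⟨y, hyS⟩
  obtain ⟨d, -, hd₁, hd₂⟩ := p.exists_boundary_dart (Subtype.val ⁻¹' T) hxT hyT
  exact ⟨d.fst, ⟨d.fst.2, hd₁⟩, d.snd, ⟨d.snd.2, hd₂⟩, d.adj⟩

theorem neighborSet_inter_subset_of_degIn_le {S T : Set V} {v : V} (hST : S ⊆ T) (hT : T.Finite)
    (h : degIn G T v ≤ degIn G S v) : G.neighborSet v ∩ T ⊆ S := by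
  rw [← eq_of_subset_of_ncard_le (inter_subset_inter_right _ hST) h (hT.inter_of_right _)]
  exact inter_subset_right

namespace Walk

variable {a b x v : V} {p : G.Walk a b}

theorem IsPath.eq_of_mem_takeUntil_of_mem_dropUntil [DecidableEq V] (hp : p.IsPath)
    (hx : x ∈ p.support) (hv₁ : v ∈ (p.takeUntil x hx).support)
    (hv₂ : v ∈ (p.dropUntil x hx).support) : v = x := by
  have hnd := hp.support_nodup
  rw [← p.take_spec hx, support_append] at hnd
  rw [← cons_tail_support, List.mem_cons] at hv₂
  exact hv₂.resolve_right (List.disjoint_of_nodup_append hnd hv₁)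

theorem IsPath.exists_walk_to_end_avoiding (hp : p.IsPath) (hx : x ∈ p.support) (hxv : x ≠ v) :
    ∃ c ∈ ({a, b} : Set V), ∃ q : G.Walk x c,
      {y | y ∈ q.support} ⊆ {y | y ∈ p.support} ∧ v ∉ q.support := by
  classical
  by_cases hv : v ∈ (p.takeUntil x hx).support
  · exact ⟨b, by simp, p.dropUntil x hx, fun y hy => p.support_dropUntil_subset_support hx hy,
      fun hv' => hxv (hp.eq_of_mem_takeUntil_of_mem_dropUntil hx hv hv').symm⟩
  · exact ⟨a, by simp, (p.takeUntil x hx).reverse,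
      fun y hy => p.support_takeUntil_subset_support hx (by simpa using hy), by simpa using hv⟩

theorem IsPath.exists_shortcut (hp : p.IsPath) {i j : ℕ} (hij : i + 2 ≤ j) (hj : j ≤ p.length)
    (h : G.Adj (p.getVert i) (p.getVert j)) :
    ∃ q : G.Walk a b, q.IsPath ∧ q.length < p.length ∧
      {x | x ∈ q.support} ⊆ {x | x ∈ p.support} ∧ p.getVert i ∈ q.support ∧
      p.getVert j ∈ q.support := by
  let q := (p.take i).append (cons h (p.drop j))
  have hq : q.support = p.support.take (i + 1) ++ p.support.drop j := by
    rw [support_append, support_cons, List.tail_cons, support_take,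
      drop_support_eq_support_drop_min, min_eq_left hj]
  have hsub : (p.support.take (i + 1) ++ p.support.drop j).Sublist p.support := by
    have := (List.take_sublist_take_left (l := p.support) (by omega : i + 1 ≤ j)).append
      (List.Sublist.refl (p.support.drop j))
    rwa [List.take_append_drop] at this
  refine ⟨q, ?_, ?_, fun x hx => ?_, ?_, ?_⟩
  · rw [isPath_def, hq]
    exact hsub.nodup hp.support_nodup
  · simp only [q, length_append, length_cons, take_length, drop_length]
    omega
  · rw [mem_ofPred_eq, hq] at hx
    exact hsub.subset hx
  · exact (mem_support_append_iff _ _).2 (Or.inl (end_mem_support _))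
  · exact (mem_support_append_iff _ _).2 (Or.inr (List.mem_cons_of_mem _ (start_mem_support _)))

theorem connected_induce_getVert_image_Ioo (p : G.Walk a b) (hp : 2 ≤ p.length) :
    (G.induce (p.getVert '' Ioo 0 p.length)).Connected := by
  have : p.getVert '' Ioo 0 p.length = {x | x ∈ ((p.drop 1).take (p.length - 2)).support} := by
    ext x
    simp only [mem_image, mem_Ioo, mem_ofPred_eq, mem_support_iff_exists_getVert, take_getVert,
      drop_getVert, take_length, drop_length]
    constructor
    · rintro ⟨k, ⟨hk0, hkn⟩, rfl⟩
      exact ⟨k - 1, by congr 1; omega, by omega⟩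
    · rintro ⟨m, rfl, hm⟩
      exact ⟨1 + min (p.length - 2) m, ⟨by omega, by omega⟩, rfl⟩
  rw [this]
  exact connected_induce_support _

end Walk

end SimpleGraph

open SimpleGraph

theorem TwoVC.connected {W : Type*} {H : SimpleGraph W} (h : TwoVC H) : H.Connected := by
  have hW : 2 < (univ : Set W).ncard := by rw [ncard_univ]; exact h.1
  obtain ⟨a, -⟩ := nonempty_of_ncard_ne_zero (s := (univ : Set W)) (by omega)
  refine (connected_iff_exists_forall_reachable H).2 ⟨a, fun b => ?_⟩
  obtain ⟨r, -, hra, hrb⟩ := exists_ne_ne_of_two_lt_ncard hW a b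
  exact ((h.2 r).preconnected ⟨a, hra.symm⟩ ⟨b, hrb.symm⟩).map (Embedding.induce _).toHom

theorem twoVC_induce_iff {V : Type*} {G : SimpleGraph V} {S : Set V} :
    TwoVC (G.induce S) ↔ 2 < S.ncard ∧ ∀ v ∈ S, (G.induce (S \ {v})).Connected := by
  have key (v : S) :
      ((G.induce S).induce {v}ᶜ).Connected ↔ (G.induce (S \ {v.1})).Connected := by
    let e := (Embedding.induce (G := G) S).comp (Embedding.induce ({v}ᶜ : Set S))
    have he : range e = S \ {v.1} := by
      ext x
      constructor
      · rintro ⟨⟨⟨x, hxS⟩, hxv⟩, rfl⟩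
        exact ⟨hxS, fun h => hxv (Subtype.ext h)⟩
      · rintro ⟨hxS, hxv⟩
        exact ⟨⟨⟨x, hxS⟩, fun h => hxv (congrArg Subtype.val h)⟩, rfl⟩
    rw [(Embedding.isoInduceRange e).connected_iff, he]
  simp only [TwoVC, Nat.card_coe_set_eq, Subtype.forall, key]

namespace TwoVC

variable {V : Type*} {G : SimpleGraph V} {S : Set V}

theorem finite (h : TwoVC (G.induce S)) : S.Finite :=
  finite_of_ncard_pos ((twoVC_induce_iff.1 h).1.trans' two_pos)

theorem connected_induce_diff_singleton (h : TwoVC (G.induce S)) (v : V) :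
    (G.induce (S \ {v})).Connected := by
  by_cases hv : v ∈ S
  · exact (twoVC_induce_iff.1 h).2 v hv
  · rw [sdiff_singleton_eq_self hv]
    exact h.connected

theorem two_le_degIn (h : TwoVC (G.induce S)) {v : V} (hv : v ∈ S) : 2 ≤ degIn G S v := by
  have hcard := (twoVC_induce_iff.1 h).1
  obtain ⟨t, htS, htv, -⟩ := exists_ne_ne_of_two_lt_ncard hcard v v
  obtain ⟨u, ⟨-, hu⟩, a, ⟨haS, hav⟩, hva⟩ :=
    exists_adj_of_connected_induce h.connected hv htS (T := {v}) rfl htv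
  rw [mem_singleton_iff.1 hu] at hva
  obtain ⟨t', ht'S, ht'v, ht'a⟩ := exists_ne_ne_of_two_lt_ncard hcard v a
  obtain ⟨u', ⟨-, hu'⟩, b, ⟨⟨hbS, hba⟩, -⟩, hvb⟩ :=
    exists_adj_of_connected_induce (h.connected_induce_diff_singleton a)
      ⟨hv, fun e => hav e.symm⟩ ⟨ht'S, ht'a⟩ (T := {v}) rfl ht'v
  rw [mem_singleton_iff.1 hu'] at hvb
  calc 2 = ({a, b} : Set V).ncard := (ncard_pair fun e => hba e.symm).symm
    _ ≤ degIn G S v :=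
      ncard_le_ncard (pair_subset ⟨hva, haS⟩ ⟨hvb, hbS⟩) (h.finite.inter_of_right _)

theorem union_support_of_isPath {A : Set V} (hA : TwoVC (G.induce A)) {a b : V}
    {p : G.Walk a b} (hp : p.IsPath) (ha : a ∈ A) (hb : b ∈ A) :
    TwoVC (G.induce (A ∪ {x | x ∈ p.support})) := by
  refine twoVC_induce_iff.2 ⟨(twoVC_induce_iff.1 hA).1.trans_le
    (ncard_le_ncard subset_union_left (hA.finite.union (List.finite_toSet _))), fun v _ => ?_⟩
  have hAv := hA.connected_induce_diff_singleton v
  have hAv_sub : A \ {v} ⊆ (A ∪ {x | x ∈ p.support}) \ {v} :=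
    sdiff_subset_sdiff_left subset_union_left
  obtain ⟨⟨u, hu⟩⟩ := hAv.nonempty
  refine induce_connected_of_patches u (hAv_sub hu) fun {x} hx => ?_
  rcases hx with ⟨hxA | hxp, hxv⟩
  · exact ⟨A \ {v}, hAv_sub, hu, ⟨hxA, hxv⟩, hAv.preconnected _ _⟩
  obtain ⟨c, hc, q, hqp, hvq⟩ := hp.exists_walk_to_end_avoiding hxp (by simpa using hxv)
  have hcA : c ∈ A \ {v} := ⟨by rcases hc with rfl | rfl <;> assumption,
    fun e => hvq (mem_singleton_iff.1 e ▸ q.end_mem_support)⟩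
  refine ⟨A \ {v} ∪ {y | y ∈ q.support}, union_subset hAv_sub fun y hy => ⟨Or.inr (hqp hy),
    fun e => hvq (mem_singleton_iff.1 e ▸ hy)⟩, Or.inl hu, Or.inr q.start_mem_support, ?_⟩
  exact (induce_union_connected hAv.preconnected q.connected_induce_support.preconnected
    ⟨c, hcA, q.end_mem_support⟩).preconnected _ _

end TwoVC

namespace SimpleGraph

variable {V : Type*} {G : SimpleGraph V}

-- Unlike a classical ear, `p` may pass through `A` between its ends.
def Walk.IsEar {a b : V} (p : G.Walk a b) (A C : Set V) : Prop :=
  p.IsPath ∧ a ∈ A ∧ b ∈ A ∧ {x | x ∈ p.support} ⊆ C ∧ ∃ x ∈ p.support, x ∉ A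

theorem exists_isEar {A C : Set V} (hC : TwoVC (G.induce C)) (hA : TwoVC (G.induce A))
    (hAC : A ⊆ C) (hCA : (C \ A).Nonempty) : ∃ (a b : V) (p : G.Walk a b), p.IsEar A C := by
  classical
  obtain ⟨y, hyC, hyA⟩ := hCA
  obtain ⟨⟨a, haA⟩⟩ := hA.connected.nonempty
  obtain ⟨a₀, ⟨-, ha₀A⟩, y₁, ⟨hy₁C, hy₁A⟩, hadj⟩ :=
    exists_adj_of_connected_induce hC.connected (hAC haA) hyC haA hyA
  obtain ⟨a₁, ha₁A, ha₁⟩ :=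
    exists_ne_of_one_lt_ncard ((twoVC_induce_iff.1 hA).1.trans' one_lt_two) a₀
  obtain ⟨q⟩ := (hC.connected_induce_diff_singleton a₀).preconnected
    ⟨y₁, hy₁C, fun e => hy₁A (mem_singleton_iff.1 e ▸ ha₀A)⟩ ⟨a₁, hAC ha₁A, ha₁⟩
  let r := (q.map (Embedding.induce _).toHom).bypass
  have hr : ∀ x ∈ r.support, x ∈ C \ {a₀} := fun x hx => by
    obtain ⟨z, -, rfl⟩ :=
      List.mem_map.1 (Walk.support_map _ _ ▸ Walk.support_bypass_subset_support _ hx)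
    exact z.2
  refine ⟨a₀, a₁, .cons hadj r, (Walk.cons_isPath_iff _ _).2 ⟨Walk.bypass_isPath _,
    fun h => (hr _ h).2 rfl⟩, ha₀A, ha₁A, fun x hx => ?_, y₁,
    List.mem_cons_of_mem _ (Walk.start_mem_support _), hy₁A⟩
  rcases List.mem_cons.1 hx with rfl | hx
  · exact hAC ha₀A
  · exact (hr x hx).1

theorem exists_isEar_minimal {A C : Set V} (hC : TwoVC (G.induce C)) (hA : TwoVC (G.induce A))
    (hAC : A ⊆ C) (hCA : (C \ A).Nonempty) : ∃ (a b : V) (p : G.Walk a b), p.IsEar A C ∧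
      ∀ ⦃a' b' : V⦄ (q : G.Walk a' b'), q.IsEar A C → p.length ≤ q.length := by
  classical
  have hex : ∃ n, ∃ (a b : V) (p : G.Walk a b), p.IsEar A C ∧ p.length = n := by
    obtain ⟨a, b, p, hp⟩ := exists_isEar hC hA hAC hCA
    exact ⟨_, a, b, p, hp, rfl⟩
  obtain ⟨a, b, p, hp, hlen⟩ := Nat.find_spec hex
  exact ⟨a, b, p, hp, fun _ _ q hq => hlen ▸ Nat.find_min' hex ⟨_, _, q, hq, rfl⟩⟩

namespace Walk.IsEar

variable {A C : Set V} {a b : V} {p : G.Walk a b} (hp : p.IsEar A C)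
  (hmin : ∀ ⦃a' b' : V⦄ (q : G.Walk a' b'), q.IsEar A C → p.length ≤ q.length)
include hp hmin

theorem getVert_notMem_of_minimal {k : ℕ} (hk0 : 0 < k) (hkn : k < p.length) :
    p.getVert k ∉ A := by
  intro hkA
  obtain ⟨hpath, ha, hb, hpC, y, hyp, hyA⟩ := hp
  obtain ⟨i, rfl, -⟩ := mem_support_iff_exists_getVert.1 hyp
  rcases lt_or_gt_of_ne (fun e : i = k => hyA (e ▸ hkA)) with hik | hki
  · have hy : (p.take k).getVert i = p.getVert i := by rw [take_getVert, min_eq_right hik.le]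
    have := hmin (p.take k) ⟨hpath.take k, ha, hkA, fun x hx => hpC (by
      rw [mem_ofPred_eq, support_take] at hx; exact List.take_subset _ _ hx),
      _, getVert_mem_support _ i, hy ▸ hyA⟩
    rw [take_length] at this
    omega
  · have hy : (p.drop k).getVert (i - k) = p.getVert i := by
      rw [drop_getVert, Nat.add_sub_cancel' hki.le]
    have := hmin (p.drop k) ⟨hpath.drop k, hkA, hb, fun x hx => hpC (by
      rw [mem_ofPred_eq, drop_support_eq_support_drop_min] at hx; exact List.drop_subset _ _ hx),
      _, getVert_mem_support _ (i - k), hy ▸ hyA⟩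
    rw [drop_length] at this
    omega

theorem length_le_of_getVert_mem_support {i : ℕ} (hi0 : 0 < i) (hin : i < p.length)
    ⦃a' b' : V⦄ (q : G.Walk a' b') (hq : q.IsPath) (ha' : a' ∈ A) (hb' : b' ∈ A)
    (hqC : {x | x ∈ q.support} ⊆ C) (hiq : p.getVert i ∈ q.support) : p.length ≤ q.length :=
  hmin q ⟨hq, ha', hb', hqC, _, hiq, hp.getVert_notMem_of_minimal hmin hi0 hin⟩

theorem eq_sub_one_or_eq_add_one_of_adj {i j : ℕ} (hi0 : 0 < i) (hin : i < p.length)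
    (hj : j ≤ p.length) (h : G.Adj (p.getVert i) (p.getVert j)) : j = i - 1 ∨ j = i + 1 := by
  have hji : j ≠ i := fun e => h.ne (by rw [e])
  have hpC := hp.2.2.2.1
  by_contra! hne
  rcases lt_or_gt_of_ne hji with hlt | hlt
  · obtain ⟨q, hq, hlen, hqp, -, hiq⟩ :=
      hp.1.exists_shortcut (i := j) (j := i) (by omega) hin.le h.symm
    exact (hp.length_le_of_getVert_mem_support hmin hi0 hin q hq hp.2.1 hp.2.2.1 (hqp.trans hpC)
      hiq).not_gt hlen
  · obtain ⟨q, hq, hlen, hqp, hiq, -⟩ := hp.1.exists_shortcut (i := i) (j := j) (by omega) hj h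
    exact (hp.length_le_of_getVert_mem_support hmin hi0 hin q hq hp.2.1 hp.2.2.1 (hqp.trans hpC)
      hiq).not_gt hlen

-- Detouring from `p.getVert i` to `z` on either side gives two ears, which can only be as long as
-- `p` when `p.length = 2`.
theorem length_eq_two_of_adj_notMem_support {i : ℕ} (hi0 : 0 < i) (hin : i < p.length) {z : V}
    (h : G.Adj (p.getVert i) z) (hzC : z ∈ C) (hzA : z ∈ A) (hzp : z ∉ p.support) :
    p.length = 2 ∧ i = 1 := by
  have hshort := hp.length_le_of_getVert_mem_support hmin hi0 hin
  obtain ⟨hpath, ha, hb, hpC, -⟩ := hp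
  have hsubC : ∀ {d : V} (q : G.Walk (p.getVert i) d),
      {x | x ∈ q.support} ⊆ {x | x ∈ p.support} → {x | x ∈ (cons h.symm q).support} ⊆ C := by
    intro d q hq x hx
    rcases List.mem_cons.1 hx with rfl | hx
    · exact hzC
    · exact hpC (hq hx)
  have h₁ := hshort (cons h.symm (p.take i).reverse)
    ((cons_isPath_iff _ _).2 ⟨(hpath.take i).reverse, fun h => hzp (by
      rw [support_reverse, List.mem_reverse, support_take] at h; exact List.take_subset _ _ h)⟩)
    hzA ha (hsubC _ fun x hx => by
      rw [mem_ofPred_eq, support_reverse, List.mem_reverse, support_take] at hx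
      exact List.take_subset _ _ hx) (by simp)
  have h₂ := hshort (cons h.symm (p.drop i))
    ((cons_isPath_iff _ _).2 ⟨hpath.drop i, fun h => hzp (by
      rw [drop_support_eq_support_drop_min] at h; exact List.drop_subset _ _ h)⟩)
    hzA hb (hsubC _ fun x hx => by
      rw [mem_ofPred_eq, drop_support_eq_support_drop_min] at hx
      exact List.drop_subset _ _ hx) (List.mem_cons_of_mem _ (start_mem_support _))
  simp only [length_cons, length_reverse, take_length, drop_length] at h₁ h₂
  omega

theorem neighborSet_inter_subset (hCA : C \ A ⊆ {x | x ∈ p.support}) (hnt : (C \ A).Nontrivial)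
    {i : ℕ} (hi0 : 0 < i) (hin : i < p.length) :
    G.neighborSet (p.getVert i) ∩ C ⊆ {p.getVert (i - 1), p.getVert (i + 1)} := by
  rintro z ⟨hz, hzC⟩
  by_cases hzp : z ∈ p.support
  · obtain ⟨j, rfl, hj⟩ := mem_support_iff_exists_getVert.1 hzp
    rcases hp.eq_sub_one_or_eq_add_one_of_adj hmin hi0 hin hj hz with rfl | rfl
    exacts [Or.inl rfl, Or.inr rfl]
  have hzA : z ∈ A := by_contra fun h => hzp (hCA ⟨hzC, h⟩)
  obtain ⟨hn, rfl⟩ := hp.length_eq_two_of_adj_notMem_support hmin hi0 hin hz hzC hzA hzp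
  refine absurd (fun x hx => ?_) (hnt.not_subset_singleton (x := p.getVert 1))
  obtain ⟨m, rfl, hm⟩ := mem_support_iff_exists_getVert.1 (hCA hx)
  have hm' : m ≠ 0 ∧ m ≠ p.length := ⟨by rintro rfl; exact hx.2 (by simpa using hp.2.1),
    by rintro rfl; exact hx.2 (by simpa using hp.2.2.1)⟩
  rw [mem_singleton_iff, show m = 1 by omega]

end Walk.IsEar

end SimpleGraph

theorem IsMRS.subset_support_of_isEar {V : Type*} {G : SimpleGraph V} {C Y : Set V}
    (hY : IsMRS (Cv G) C Y) {a b : V} {p : G.Walk a b} (hp : p.IsEar (C \ Y) C) :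
    Y ⊆ {x | x ∈ p.support} := by
  obtain ⟨hpath, ha, hb, hpC, x, hxp, hxA⟩ := hp
  have hxY : x ∈ Y := by_contra fun h => hxA ⟨hpC hxp, h⟩
  rcases hY.subset_or_disjoint (TwoVC.union_support_of_isPath hY.2.2.1 hpath ha hb)
    subset_union_left (union_subset sdiff_subset hpC) with h | h
  · exact fun y hy => (h hy).resolve_left fun hy' => hy'.2 hy
  · exact absurd (Or.inr hxp) (disjoint_left.1 h hxY)

theorem IsMRS.twoDegPath {V : Type*} {G : SimpleGraph V} {C Y : Set V} (hC : C ∈ Cv G)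
    (hY : IsMRS (Cv G) C Y) (hnt : Y.Nontrivial) : TwoDegPath G C Y := by
  have hCA : C \ (C \ Y) = Y := sdiff_sdiff_cancel_left hY.2.1
  obtain ⟨a, b, p, hp, hmin⟩ :=
    exists_isEar_minimal hC hY.2.2.1 sdiff_subset (by rw [hCA]; exact hnt.nonempty)
  have hYp := hY.subset_support_of_isEar hp
  have hpC (k : ℕ) : p.getVert k ∈ C := hp.2.2.2.1 (p.getVert_mem_support k)
  have hYI : Y = p.getVert '' Ioo 0 p.length := by
    ext y
    constructor
    · intro hy
      obtain ⟨k, rfl, hk⟩ := Walk.mem_support_iff_exists_getVert.1 (hYp hy)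
      refine ⟨k, ⟨Nat.pos_of_ne_zero ?_, lt_of_le_of_ne hk ?_⟩, rfl⟩ <;> rintro rfl
      · exact (p.getVert_zero ▸ hp.2.1).2 hy
      · exact (p.getVert_length ▸ hp.2.2.1).2 hy
    · rintro ⟨k, ⟨hk0, hkn⟩, rfl⟩
      by_contra hy
      exact hp.getVert_notMem_of_minimal hmin hk0 hkn ⟨hpC k, hy⟩
  refine ⟨hY.2.1, ?_, ?_⟩
  · rw [hYI]
    rintro _ ⟨i, ⟨hi0, hin⟩, rfl⟩
    refine le_antisymm ?_ (TwoVC.two_le_degIn hC (hpC i))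
    calc degIn G C (p.getVert i) ≤ ({p.getVert (i - 1), p.getVert (i + 1)} : Set V).ncard :=
          ncard_le_ncard (hp.neighborSet_inter_subset hmin (by rwa [hCA]) (by rwa [hCA]) hi0 hin)
      _ ≤ 2 := (ncard_insert_le _ _).trans (by rw [ncard_singleton])
  · obtain ⟨_, i, ⟨hi0, hin⟩, -⟩ := hYI ▸ hnt.nonempty
    rw [hYI]
    exact p.connected_induce_getVert_image_Ioo (by omega)

theorem stmt10_general {V : Type*} (G : SimpleGraph V) :
    SDProperty (Cv G) := by
  intro C hC C' hC' hC'C Y hY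
  by_contra! h
  obtain ⟨y', hy'Y, hy'C'⟩ := not_subset.1 h.1
  obtain ⟨y, hyY, hyC'⟩ := h.2
  have hYpath := hY.twoDegPath hC ⟨y, hyY, y', hy'Y, fun e => hy'C' (e ▸ hyC')⟩
  obtain ⟨u, ⟨huY, huC'⟩, w, ⟨hwY, hwC'⟩, huw⟩ :=
    exists_adj_of_connected_induce hYpath.2.2 hyY hy'Y hyC' hy'C'
  refine hwC' (neighborSet_inter_subset_of_degIn_le hC'C.subset (TwoVC.finite hC) ?_
    ⟨huw, hY.2.1 hwY⟩)
  rw [hYpath.2.1 u huY]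
  exact TwoVC.two_le_degIn hC' huC'

theorem stmt10 {V : Type*} [Fintype V] (G : SimpleGraph V) (hG : TwoVC G) :
    SDProperty (Cv G) :=
  stmt10_general G
end

section
/- Let G be a simple undirected graph and C a v-component such that G[C] is not a cycle. Then the auxiliary graph H_C is 2-vertex-connected. -/
open Set

/-- Vertex type of the auxiliary graph `H_C`: ordinary vertices (degree `> 2` vertices of `G[C]`),
maximal two-deg paths, and edges of `G[C]` joining two vertices of degree `> 2`. -/
abbrev HVert {V : Type*} (G : SimpleGraph V) (C : Set V) : Type _ :=
  {v : V // v ∈ C ∧ 2 < degIn G C v} ⊕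
  ({P : Set V // MaxTwoDegPath G C P} ⊕
   {e : Sym2 V // e ∈ G.edgeSet ∧ ∀ v ∈ e, v ∈ C ∧ 2 < degIn G C v})

/-- Base relation of the auxiliary graph. -/
def HRel {V : Type*} (G : SimpleGraph V) (C : Set V) : HVert G C → HVert G C → Prop
  | Sum.inl u, Sum.inr (Sum.inl P) => ∃ w ∈ P.1, G.Adj u.1 w
  | Sum.inl u, Sum.inr (Sum.inr e) => u.1 ∈ e.1
  | _, _ => False

/-- The auxiliary graph `H_C`. -/
def HC {V : Type*} (G : SimpleGraph V) (C : Set V) : SimpleGraph (HVert G C) :=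
  SimpleGraph.fromRel (HRel G C)

/-- `{a, b}` is a cut point pair of `H`: a vertex cut of size exactly 2. -/
def CutPair {W : Type*} (H : SimpleGraph W) (a b : W) : Prop :=
  a ≠ b ∧ ¬ (H.induce ({a, b}ᶜ : Set W)).Preconnected

/-- The vertex `x` of the auxiliary graph represents the candidate set `Y ⊆ C`. -/
def RepsCan {V : Type*} (G : SimpleGraph V) (C : Set V) : HVert G C → Set V → Prop
  | Sum.inl u, Y => Y = {u.1}
  | Sum.inr (Sum.inl P), Y => Y = P.1
  | Sum.inr (Sum.inr _), _ => False

/-- `x` is an auxiliary vertex of `H_C` (i.e. lies in `Λ(C)`). -/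
def IsAuxVert {V : Type*} (G : SimpleGraph V) (C : Set V) : HVert G C → Prop
  | Sum.inl _ => False
  | Sum.inr _ => True

/-!
Every edge of `G[C]` becomes a walk of length at most two in `H_C`: through the subdivision vertex
if both ends have degree `> 2`, a single edge if exactly one does, and nothing if both lie on the
same maximal path. So connectivity of a piece of `G[C]` transfers to `H_C`. Deleting a vertex of
`H_C` corresponds to deleting from `G[C]` a vertex of degree `> 2`, a whole maximal two-deg path,
or one edge, and in each case 2-connectivity keeps the rest of `G[C]` connected; for a path, peel
it off one vertex at a time, each being a leaf when it is removed. `H_C` has three vertices because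
`G[C]`, not being a cycle, has a vertex `u` of degree `> 2`, and its neighbours cannot all lie on a
single two-deg path: by the handshake lemma at most two edges leave such a path.
-/

namespace SimpleGraph

variable {α β : Type*}

def induceInduceIso (G : SimpleGraph α) {s t : Set α} (h : s ⊆ t) :
    (G.induce t).induce {v : t | v.1 ∈ s} ≃g G.induce s where
  toFun v := ⟨v.1.1, v.2⟩
  invFun v := ⟨⟨v.1, h v.2⟩, v.2⟩
  left_inv _ := rfl
  right_inv _ := rfl
  map_rel_iff' := Iff.rfl

lemma ncard_neighborSet_induce (G : SimpleGraph α) (s : Set α) (v : s) :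
    ((G.induce s).neighborSet v).ncard = (G.neighborSet v ∩ s).ncard := by
  have himg : Subtype.val '' (G.induce s).neighborSet v = G.neighborSet v ∩ s := by
    ext w
    constructor
    · rintro ⟨w, hw, rfl⟩
      exact ⟨hw, w.2⟩
    · rintro ⟨hw, hws⟩
      exact ⟨⟨w, hws⟩, hw, rfl⟩
  rw [← himg, Set.ncard_image_of_injective _ Subtype.val_injective]

lemma exists_mem_ne_of_mem_edgeSet {G : SimpleGraph α} {e : Sym2 α} (he : e ∈ G.edgeSet)
    (v : α) : ∃ w ∈ e, w ≠ v := by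
  induction e using Sym2.ind with | h a b => ?_
  by_cases hav : a = v
  · exact ⟨b, Sym2.mem_mk_right a b, fun hbv => G.ne_of_adj he (hav.trans hbv.symm)⟩
  · exact ⟨a, Sym2.mem_mk_left a b, hav⟩

lemma Preconnected.of_reachable_map {G : SimpleGraph α} {H : SimpleGraph β}
    (hG : G.Preconnected) (f : α → β) (hf : ∀ a b, G.Adj a b → H.Reachable (f a) (f b))
    (hcover : ∀ y, ∃ a, H.Reachable (f a) y) : H.Preconnected := by
  have hmap : ∀ a b, H.Reachable (f a) (f b) := fun a b => by
    obtain ⟨w⟩ := hG a b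
    induction w with
    | nil => rfl
    | cons h _ ih => exact (hf _ _ h).trans ih
  intro y z
  obtain ⟨a, ha⟩ := hcover y
  obtain ⟨b, hb⟩ := hcover z
  exact ha.symm.trans ((hmap a b).trans hb)

/-- A connected graph on `n` vertices has at least `n - 1` edges, so by the handshake lemma its
degrees fall short of `2` by at most `2` in total. -/
lemma Connected.sum_le_two [Fintype α] {G : SimpleGraph α} (hG : G.Connected) (f : α → ℕ)
    (hf : ∀ a, (G.neighborSet a).ncard + f a ≤ 2) : ∑ a, f a ≤ 2 := by
  classical
  have hdeg : ∀ a, (G.neighborSet a).ncard = G.degree a := fun a => by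
    rw [Set.ncard_eq_toFinset_card', Set.toFinset_card, card_neighborSet_eq_degree]
  have hsum : ∑ a, ((G.neighborSet a).ncard + f a) ≤ ∑ _a : α, 2 :=
    Finset.sum_le_sum fun a _ => hf a
  have hedges := hG.card_vert_le_card_edgeSet_add_one
  rw [Nat.card_eq_fintype_card, Nat.card_eq_fintype_card, ← edgeFinset_card] at hedges
  simp only [Finset.sum_add_distrib, hdeg, sum_degrees_eq_twice_card_edges, Finset.sum_const,
    Finset.card_univ, smul_eq_mul] at hsum
  omega

end SimpleGraph

open SimpleGraph

namespace TwoVC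

variable {α : Type*} {K : SimpleGraph α}

lemma finite_s16 (h : TwoVC K) : Finite α :=
  Nat.finite_of_card_ne_zero (by have := h.1; omega)

lemma exists_ne_ne (h : TwoVC K) (a b : α) : ∃ c, c ≠ a ∧ c ≠ b := by
  by_contra! hab
  have := h.finite_s16
  have hsub : (Set.univ : Set α) ⊆ {a, b} := fun c _ => by
    by_cases hca : c = a
    · exact Or.inl hca
    · exact Or.inr (hab c hca)
  have hcard := (Set.ncard_le_ncard hsub).trans (Set.ncard_insert_le a {b})
  rw [Set.ncard_univ, Set.ncard_singleton] at hcard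
  have := h.1
  omega

lemma connected_s16 (h : TwoVC K) : K.Connected := by
  have := h.1
  have : Nonempty α := (Nat.card_pos_iff.mp (by omega)).1
  refine Connected.mk fun a b => ?_
  obtain ⟨c, hca, hcb⟩ := h.exists_ne_ne a b
  exact ((h.2 c).preconnected ⟨a, hca.symm⟩ ⟨b, hcb.symm⟩).map (Embedding.induce _).toHom

lemma two_le_ncard_neighborSet (h : TwoVC K) (v : α) : 2 ≤ (K.neighborSet v).ncard := by
  by_contra! hv
  have := h.finite_s16
  obtain ⟨m, hvm, hm⟩ : ∃ m, v ≠ m ∧ K.neighborSet v ⊆ {m} := by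
    rcases (Set.ncard_le_one_iff_subsingleton.mp (Nat.le_of_lt_succ hv)).eq_empty_or_singleton
      with he | ⟨m, hm⟩
    · obtain ⟨m, hmv, -⟩ := h.exists_ne_ne v v
      exact ⟨m, hmv.symm, by simp [he]⟩
    · exact ⟨m, K.ne_of_adj (hm.ge rfl), hm.le⟩
  obtain ⟨w, hwv, hwm⟩ := h.exists_ne_ne v m
  have : Nontrivial ({m}ᶜ : Set α) :=
    ⟨⟨v, hvm⟩, ⟨w, hwm⟩, fun h => hwv (congrArg Subtype.val h).symm⟩
  obtain ⟨u, hu⟩ := (h.2 m).preconnected.exists_adj_of_nontrivial ⟨v, hvm⟩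
  exact u.2 (hm hu)

lemma not_isBridge (h : TwoVC K) (e : Sym2 α) : ¬ K.IsBridge e := by
  induction e using Sym2.ind with | h u v => ?_
  rw [isBridge_iff, not_not]
  by_cases huv : u = v
  · rw [huv]
  obtain ⟨w, hw, hwv⟩ : ∃ w ∈ K.neighborSet u, w ≠ v := by
    by_contra! hsub
    have := (Set.ncard_le_ncard (show K.neighborSet u ⊆ {v} from hsub)).trans
      (Set.ncard_singleton v).le
    have := h.two_le_ncard_neighborSet u
    omega
  let avoid : K.induce {u}ᶜ →g K.deleteEdges {s(u, v)} :=
    { toFun := Subtype.val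
      map_rel' := fun {a b} hab => deleteEdges_adj.mpr ⟨hab, fun he => by
        rcases Sym2.mem_iff.mp (he ▸ Sym2.mem_mk_left u v : u ∈ s(a.1, b.1)) with hu | hu
        · exact a.2 hu.symm
        · exact b.2 hu.symm⟩ }
  have hreach : (K.induce {u}ᶜ).Reachable ⟨w, (K.ne_of_adj hw).symm⟩ ⟨v, Ne.symm huv⟩ :=
    (h.2 u).preconnected _ _
  exact (deleteEdges_adj.mpr ⟨hw, fun he => hwv (Sym2.congr_right.mp he)⟩).reachable.trans
    (hreach.map avoid)

/-- Induction on `P`: remove a vertex `p` that does not disconnect `K[P]`; then `K - (P \ {p})` is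
connected, and `p` is a leaf of it, since one of its two neighbours lies in `P \ {p}`. -/
lemma preconnected_induce_compl (h : TwoVC K) {P : Set α} (hP : (K.induce P).Connected)
    (hdeg : ∀ p ∈ P, (K.neighborSet p).ncard = 2) : (K.induce Pᶜ).Preconnected := by
  have := h.finite_s16
  induction hn : P.ncard using Nat.strong_induction_on generalizing P with
  | _ n ih =>
  rcases P.subsingleton_or_nontrivial with hsub | hnt
  · obtain ⟨p, rfl⟩ := hsub.eq_empty_or_singleton.resolve_left
      (Set.nonempty_iff_ne_empty.mp (Set.nonempty_coe_sort.mp hP.nonempty))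
    exact (h.2 p).preconnected
  have : Nontrivial P := hnt.coe_sort
  obtain ⟨⟨p, hp⟩, hrest⟩ := hP.exists_preconnected_induce_compl_singleton_of_finite
  obtain ⟨q, hqp, hq⟩ : ∃ q ∈ P \ {p}, K.Adj p q := by
    obtain ⟨q, hq⟩ := hP.preconnected.exists_adj_of_nontrivial ⟨p, hp⟩
    exact ⟨q, ⟨q.2, (K.ne_of_adj hq).symm⟩, hq⟩
  have hrest' : (K.induce (P \ {p})).Connected := by
    rw [← (K.induceInduceIso Set.sdiff_subset).connected_iff]
    have hset : {v : P | v.1 ∈ P \ {p}} = {⟨p, hp⟩}ᶜ := by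
      ext v
      simp [Subtype.ext_iff]
    rw [hset]
    have : Nonempty ({⟨p, hp⟩}ᶜ : Set P) :=
      ⟨⟨⟨q, hqp.1⟩, fun he => hqp.2 (congrArg Subtype.val he)⟩⟩
    exact Connected.mk hrest
  have hcompl := ih _ (hn ▸ Set.ncard_sdiff_singleton_lt_of_mem hp) hrest'
    (fun r hr => hdeg r hr.1) rfl
  have hleaf := hcompl.induce_of_degree_eq_one (s := {v | v.1 ∈ Pᶜ}) fun v hv a ha b hb => by
    have hvp : v.1 = p := by
      by_contra hvp
      exact v.2 ⟨not_not.mp hv, hvp⟩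
    have hsub : ∀ c : ((P \ {p})ᶜ : Set α), (K.induce _).Adj v c →
        c.1 ∈ K.neighborSet v \ {q} := fun c hc =>
      ⟨hc, fun hcq => c.2 ((Set.mem_singleton_iff.mp hcq) ▸ hqp)⟩
    have hone : (K.neighborSet v \ {q}).ncard = 1 := by
      rw [hvp, Set.ncard_sdiff_singleton_of_mem (show q ∈ K.neighborSet p from hq), hdeg p hp]
    exact Subtype.ext ((Set.ncard_le_one_iff_subsingleton.mp hone.le) (hsub a ha) (hsub b hb))
  rwa [(K.induceInduceIso (Set.compl_subset_compl.mpr Set.sdiff_subset)).preconnected_iff]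
    at hleaf

end TwoVC

section MaximalPaths

variable {V : Type*} {G : SimpleGraph V} {C P : Set V} {u v : V}

lemma TwoVC.two_le_degIn_s16 (hC : TwoVC (G.induce C)) (v : V) (hv : v ∈ C) : 2 ≤ degIn G C v :=
  (G.ncard_neighborSet_induce C ⟨v, hv⟩).symm.trans_ge (hC.two_le_ncard_neighborSet ⟨v, hv⟩)

lemma degIn_eq_two (hmin : ∀ v ∈ C, 2 ≤ degIn G C v) (hv : v ∈ C) (h : ¬ 2 < degIn G C v) :
    degIn G C v = 2 :=
  le_antisymm (not_lt.mp h) (hmin v hv)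

lemma exists_two_lt_degIn (hC : TwoVC (G.induce C)) (hnc : ¬ IsCycleGraph (G.induce C)) :
    ∃ u ∈ C, 2 < degIn G C u := by
  by_contra! h
  exact hnc ⟨hC.connected_s16, fun v => (G.ncard_neighborSet_induce C v).trans
    (le_antisymm (h v v.2) (hC.two_le_degIn_s16 v v.2))⟩

lemma TwoDegPath.subset_sUnion (hP : TwoDegPath G C P) (hv : v ∈ P) :
    P ⊆ ⋃₀ {Q | TwoDegPath G C Q ∧ v ∈ Q} :=
  Set.subset_sUnion_of_mem ⟨hP, hv⟩

lemma twoDegPath_singleton (hv : v ∈ C) (h2 : degIn G C v = 2) : TwoDegPath G C {v} := by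
  refine ⟨Set.singleton_subset_iff.mpr hv, fun w hw => hw ▸ h2, ?_⟩
  rw [induce_singleton_eq_top, connected_top_iff]
  exact ⟨⟨v, rfl⟩⟩

lemma twoDegPath_pair (hu : u ∈ C) (hu2 : degIn G C u = 2) (hv : v ∈ C)
    (hv2 : degIn G C v = 2) (huv : G.Adj u v) : TwoDegPath G C {u, v} := by
  refine ⟨Set.insert_subset hu (Set.singleton_subset_iff.mpr hv), ?_,
    induce_pair_connected_of_adj huv⟩
  rintro w (rfl | rfl)
  exacts [hu2, hv2]

def pathThrough (G : SimpleGraph V) (C : Set V) (v : V) : Set V :=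
  ⋃₀ {P | TwoDegPath G C P ∧ v ∈ P}

lemma mem_pathThrough (hv : v ∈ C) (h2 : degIn G C v = 2) : v ∈ pathThrough G C v :=
  (twoDegPath_singleton hv h2).subset_sUnion rfl rfl

lemma twoDegPath_pathThrough (hv : v ∈ C) (h2 : degIn G C v = 2) :
    TwoDegPath G C (pathThrough G C v) := by
  refine ⟨Set.sUnion_subset fun P hP => hP.1.1, fun w ⟨P, hP, hw⟩ => hP.1.2.1 w hw, ?_⟩
  exact induce_sUnion_connected_of_pairwise_not_disjoint ⟨{v}, twoDegPath_singleton hv h2, rfl⟩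
    (fun hP hQ => ⟨v, hP.2, hQ.2⟩) fun hP => hP.1.2.2

lemma maxTwoDegPath_pathThrough (hv : v ∈ C) (h2 : degIn G C v = 2) :
    MaxTwoDegPath G C (pathThrough G C v) :=
  ⟨twoDegPath_pathThrough hv h2, fun _ hQ hsub =>
    (hQ.subset_sUnion (hsub (mem_pathThrough hv h2))).antisymm hsub⟩

lemma MaxTwoDegPath.eq_pathThrough (hP : MaxTwoDegPath G C P) (hv : v ∈ P) :
    P = pathThrough G C v :=
  (hP.2 _ (twoDegPath_pathThrough (hP.1.1 hv) (hP.1.2.1 v hv)) (hP.1.subset_sUnion hv)).symm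

lemma pathThrough_eq_of_adj (hu : u ∈ C) (hu2 : degIn G C u = 2) (hv : v ∈ C)
    (hv2 : degIn G C v = 2) (huv : G.Adj u v) : pathThrough G C u = pathThrough G C v :=
  (maxTwoDegPath_pathThrough hu hu2).eq_pathThrough
    ((twoDegPath_pair hu hu2 hv hv2 huv).subset_sUnion (Set.mem_insert u {v})
      (Set.mem_insert_of_mem u rfl))

lemma TwoDegPath.ncard_neighborSet_inter_le_two [Finite V] (hP : TwoDegPath G C P)
    (hu : u ∈ C) (huP : u ∉ P) : (G.neighborSet u ∩ P).ncard ≤ 2 := by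
  classical
  have : Fintype P := Fintype.ofFinite P
  have hsum := hP.2.2.sum_le_two (fun w => if G.Adj u w then 1 else 0) fun w => by
    have h2 : (G.neighborSet w ∩ C).ncard = 2 := hP.2.1 w w.2
    rw [ncard_neighborSet_induce]
    split_ifs with huw
    · have hsub : G.neighborSet w ∩ P ⊆ (G.neighborSet w ∩ C) \ {u} := fun z ⟨hz, hzP⟩ =>
        ⟨⟨hz, hP.1 hzP⟩, fun hzu => huP ((Set.mem_singleton_iff.mp hzu) ▸ hzP)⟩
      have := Set.ncard_le_ncard hsub
      rw [Set.ncard_sdiff_singleton_of_mem (show u ∈ G.neighborSet w ∩ C from ⟨huw.symm, hu⟩),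
        h2] at this
      omega
    · have := Set.ncard_le_ncard (Set.inter_subset_inter_right (G.neighborSet w) hP.1)
      rw [h2] at this
      omega
  have himg : G.neighborSet u ∩ P =
      Subtype.val '' ((Finset.univ.filter fun w : P => G.Adj u w : Finset P) : Set P) := by
    ext w
    simp [and_comm]
  rw [himg, Set.ncard_image_of_injective _ Subtype.val_injective, Set.ncard_coe_finset]
  simpa [Finset.sum_boole] using hsum

end MaximalPaths

section AuxiliaryGraph

variable {V : Type*} {G : SimpleGraph V} {C : Set V}

lemma HC.adj_inl_path_iff (u : {v : V // v ∈ C ∧ 2 < degIn G C v})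
    (P : {P : Set V // MaxTwoDegPath G C P}) :
    (HC G C).Adj (.inl u) (.inr (.inl P)) ↔ ∃ w ∈ P.1, G.Adj u.1 w := by
  simp [HC, HRel]

lemma HC.adj_inl_edge_iff (u : {v : V // v ∈ C ∧ 2 < degIn G C v})
    (e : {e : Sym2 V // e ∈ G.edgeSet ∧ ∀ v ∈ e, v ∈ C ∧ 2 < degIn G C v}) :
    (HC G C).Adj (.inl u) (.inr (.inr e)) ↔ u.1 ∈ e.1 := by
  simp [HC, HRel]

variable (hmin : ∀ v ∈ C, 2 ≤ degIn G C v)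

noncomputable def toHC (v : C) : HVert G C :=
  if h : 2 < degIn G C v then .inl ⟨v, v.2, h⟩
  else .inr (.inl ⟨pathThrough G C v, maxTwoDegPath_pathThrough v.2 (degIn_eq_two hmin v.2 h)⟩)

lemma toHC_of_two_lt {v : C} (h : 2 < degIn G C v) : toHC hmin v = .inl ⟨v, v.2, h⟩ :=
  dif_pos h

lemma toHC_of_mem (Q : {P : Set V // MaxTwoDegPath G C P}) {v : C} (hv : v.1 ∈ Q.1) :
    toHC hmin v = .inr (.inl Q) := by
  have h2 : ¬ 2 < degIn G C v := by rw [Q.2.1.2.1 v hv]; exact lt_irrefl 2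
  rw [toHC, dif_neg h2]
  congr
  exact (Q.2.eq_pathThrough hv).symm

lemma exists_toHC_eq_path (Q : {P : Set V // MaxTwoDegPath G C P}) :
    ∃ q ∈ Q.1, ∃ hq : q ∈ C, toHC hmin ⟨q, hq⟩ = .inr (.inl Q) := by
  obtain ⟨⟨q, hq⟩⟩ := Q.2.1.2.2.nonempty
  exact ⟨q, hq, Q.2.1.1 hq, toHC_of_mem hmin Q hq⟩

lemma toHC_eq_inl {v : C} {u : {v : V // v ∈ C ∧ 2 < degIn G C v}}
    (h : toHC hmin v = .inl u) : v.1 = u.1 := by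
  unfold toHC at h
  split_ifs at h
  exact congrArg Subtype.val (Sum.inl_injective h)

lemma mem_of_toHC_eq_path {v : C} {P : {P : Set V // MaxTwoDegPath G C P}}
    (h : toHC hmin v = .inr (.inl P)) : v.1 ∈ P.1 := by
  unfold toHC at h
  split_ifs at h with h2
  rw [← Sum.inl_injective (Sum.inr_injective h)]
  exact mem_pathThrough v.2 (degIn_eq_two hmin v.2 h2)

lemma toHC_ne_edge (v : C)
    (e : {e : Sym2 V // e ∈ G.edgeSet ∧ ∀ v ∈ e, v ∈ C ∧ 2 < degIn G C v}) :
    toHC hmin v ≠ .inr (.inr e) := by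
  unfold toHC
  split_ifs <;> simp

lemma adj_toHC_edge (e : {e : Sym2 V // e ∈ G.edgeSet ∧ ∀ v ∈ e, v ∈ C ∧ 2 < degIn G C v})
    {w : V} (hw : w ∈ e.1) : (HC G C).Adj (toHC hmin ⟨w, (e.2.2 w hw).1⟩) (.inr (.inr e)) := by
  rw [toHC_of_two_lt hmin (e.2.2 w hw).2, HC.adj_inl_edge_iff]
  exact hw

lemma toHC_eq_or_adj_of_adj {p q : C} (hpq : G.Adj p q) :
    toHC hmin p = toHC hmin q ∨ (HC G C).Adj (toHC hmin p) (toHC hmin q) ∨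
      ∃ e, e.1 = s(p.1, q.1) ∧ (HC G C).Adj (toHC hmin p) (.inr (.inr e)) ∧
        (HC G C).Adj (.inr (.inr e)) (toHC hmin q) := by
  by_cases hp : 2 < degIn G C p <;> by_cases hq : 2 < degIn G C q
  · refine .inr (.inr ⟨⟨s(p.1, q.1), hpq, fun v hv => ?_⟩, rfl,
      adj_toHC_edge hmin _ (Sym2.mem_mk_left _ _),
      (adj_toHC_edge hmin _ (Sym2.mem_mk_right _ _)).symm⟩)
    rcases Sym2.mem_iff.mp hv with rfl | rfl
    exacts [⟨p.2, hp⟩, ⟨q.2, hq⟩]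
  · refine .inr (.inl ?_)
    rw [toHC_of_two_lt hmin hp, toHC, dif_neg hq, HC.adj_inl_path_iff]
    exact ⟨q, mem_pathThrough q.2 (degIn_eq_two hmin q.2 hq), hpq⟩
  · refine .inr (.inl (Adj.symm ?_))
    rw [toHC_of_two_lt hmin hq, toHC, dif_neg hp, HC.adj_inl_path_iff]
    exact ⟨p, mem_pathThrough p.2 (degIn_eq_two hmin p.2 hp), hpq.symm⟩
  · refine .inl ?_
    rw [toHC, toHC, dif_neg hp, dif_neg hq]
    congr 2
    exact Subtype.ext <| pathThrough_eq_of_adj p.2 (degIn_eq_two hmin p.2 hp) q.2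
      (degIn_eq_two hmin q.2 hq) hpq

lemma reachable_toHC_of_adj {x : HVert G C} {p q : C} (hpq : G.Adj p q)
    (hp : toHC hmin p ≠ x) (hq : toHC hmin q ≠ x)
    (he : ∀ e, x = .inr (.inr e) → e.1 ≠ s(p.1, q.1)) :
    ((HC G C).induce {x}ᶜ).Reachable ⟨toHC hmin p, hp⟩ ⟨toHC hmin q, hq⟩ := by
  rcases toHC_eq_or_adj_of_adj hmin hpq with heq | hadj | ⟨e, hes, hpe, heq⟩
  · exact (Subtype.ext heq : (⟨_, hp⟩ : ({x}ᶜ : Set (HVert G C))) = ⟨_, hq⟩) ▸ .rfl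
  · exact Adj.reachable hadj
  · have hex : (.inr (.inr e) : HVert G C) ≠ x := fun h => he e h.symm hes
    exact (Adj.reachable (v := ⟨_, hex⟩) hpe).trans
      (Adj.reachable (G := (HC G C).induce {x}ᶜ) (u := ⟨_, hex⟩) (v := ⟨_, hq⟩) heq)

lemma HC.preconnected_induce_compl {x : HVert G C} {β : Type*} {K : SimpleGraph β}
    (hK : K.Preconnected) (g : β → C) (hg : ∀ a b, K.Adj a b → G.Adj (g a) (g b))
    (havoid : ∀ a, toHC hmin (g a) ≠ x)
    (hedge : ∀ a b, K.Adj a b → ∀ e, x = .inr (.inr e) → e.1 ≠ s((g a).1, (g b).1))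
    (hcover : ∀ y, y ≠ x → ∃ a, toHC hmin (g a) = y ∨ (HC G C).Adj (toHC hmin (g a)) y) :
    ((HC G C).induce {x}ᶜ).Preconnected := by
  refine hK.of_reachable_map (fun a => ⟨toHC hmin (g a), havoid a⟩)
    (fun a b hab => reachable_toHC_of_adj hmin (hg a b hab) _ _ (hedge a b hab)) ?_
  rintro ⟨y, hy⟩
  obtain ⟨a, h | h⟩ := hcover y hy
  · exact ⟨a, (Subtype.ext h : (⟨_, havoid a⟩ : ({x}ᶜ : Set (HVert G C))) = ⟨y, hy⟩) ▸ .rfl⟩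
  · exact ⟨a, Adj.reachable h⟩

end AuxiliaryGraph

section VertexDeletion

variable {V : Type*} {G : SimpleGraph V} {C : Set V}

lemma HC.preconnected_induce_compl_inl (hC : TwoVC (G.induce C))
    (u : {v : V // v ∈ C ∧ 2 < degIn G C v}) :
    ((HC G C).induce {.inl u}ᶜ).Preconnected := by
  have hmin := hC.two_le_degIn_s16
  refine HC.preconnected_induce_compl hmin (hC.2 ⟨u.1, u.2.1⟩).preconnected Subtype.val
    (fun _ _ h => h) (fun a ha => a.2 (Subtype.ext (toHC_eq_inl hmin ha)))
    (fun _ _ _ _ he => (Sum.inl_ne_inr he).elim) ?_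
  rintro (w | Q | e) hy
  · refine ⟨⟨⟨w.1, w.2.1⟩, fun h => hy ?_⟩, .inl (toHC_of_two_lt hmin w.2.2)⟩
    rw [Set.mem_singleton_iff, Subtype.mk.injEq] at h
    exact congrArg Sum.inl (Subtype.ext h)
  · obtain ⟨q, hqQ, hq, hqQ'⟩ := exists_toHC_eq_path hmin Q
    refine ⟨⟨⟨q, hq⟩, fun h => ?_⟩, .inl hqQ'⟩
    rw [Set.mem_singleton_iff, Subtype.mk.injEq] at h
    have := Q.2.1.2.1 q hqQ
    rw [h] at this
    exact absurd u.2.2 (by omega)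
  · obtain ⟨w, hw, hwu⟩ := exists_mem_ne_of_mem_edgeSet e.2.1 u.1
    exact ⟨⟨⟨w, (e.2.2 w hw).1⟩, fun h => hwu (congrArg Subtype.val h)⟩,
      .inr (adj_toHC_edge hmin e hw)⟩

lemma HC.preconnected_induce_compl_path (hC : TwoVC (G.induce C))
    (P : {P : Set V // MaxTwoDegPath G C P}) :
    ((HC G C).induce {.inr (.inl P)}ᶜ).Preconnected := by
  have hmin := hC.two_le_degIn_s16
  have hP : ((G.induce C).induce {v : C | v.1 ∈ P.1}).Connected :=
    ((G.induceInduceIso P.2.1.1).connected_iff).mpr P.2.1.2.2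
  refine HC.preconnected_induce_compl hmin
    (hC.preconnected_induce_compl hP fun v hv => (G.ncard_neighborSet_induce C v).trans
      (P.2.1.2.1 v hv)) Subtype.val
    (fun _ _ h => h) (fun a ha => a.2 (mem_of_toHC_eq_path hmin ha))
    (fun _ _ _ _ he => by simp at he) ?_
  have hbranch : ∀ w, 2 < degIn G C w → w ∉ P.1 := fun w hw hwP => by
    have := P.2.1.2.1 w hwP
    omega
  rintro (w | Q | e) hy
  · exact ⟨⟨⟨w.1, w.2.1⟩, hbranch w.1 w.2.2⟩, .inl (toHC_of_two_lt hmin w.2.2)⟩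
  · obtain ⟨q, -, hq, hqQ⟩ := exists_toHC_eq_path hmin Q
    refine ⟨⟨⟨q, hq⟩, fun hqP => hy ?_⟩, .inl hqQ⟩
    rw [← hqQ, toHC_of_mem hmin P hqP]
  · have hw := Sym2.out_fst_mem e.1
    exact ⟨⟨⟨_, (e.2.2 _ hw).1⟩, hbranch _ (e.2.2 _ hw).2⟩, .inr (adj_toHC_edge hmin e hw)⟩

lemma HC.preconnected_induce_compl_edge (hC : TwoVC (G.induce C))
    (e : {e : Sym2 V // e ∈ G.edgeSet ∧ ∀ v ∈ e, v ∈ C ∧ 2 < degIn G C v}) :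
    ((HC G C).induce {.inr (.inr e)}ᶜ).Preconnected := by
  have hmin := hC.two_le_degIn_s16
  obtain ⟨e, he, hends⟩ := e
  induction e using Sym2.ind with | h u v => ?_
  let e' : Sym2 C := s(⟨u, (hends u (Sym2.mem_mk_left u v)).1⟩,
    ⟨v, (hends v (Sym2.mem_mk_right u v)).1⟩)
  refine HC.preconnected_induce_compl hmin
    (hC.connected_s16.connected_delete_edge_of_not_isBridge (hC.not_isBridge e')).preconnected id
    (fun _ _ h => (deleteEdges_adj.mp h).1) (fun a => toHC_ne_edge hmin a _)
    (fun a b hab f hf hfab => (deleteEdges_adj.mp hab).2 ?_) ?_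
  · rw [Set.mem_singleton_iff]
    apply Sym2.map.injective Subtype.val_injective
    rw [Sym2.map_mk, Sym2.map_mk]
    exact hfab.symm.trans (congrArg Subtype.val (Sum.inr_injective (Sum.inr_injective hf))).symm
  rintro (w | Q | f) -
  · exact ⟨⟨w.1, w.2.1⟩, .inl (toHC_of_two_lt hmin w.2.2)⟩
  · obtain ⟨q, -, hq, hqQ⟩ := exists_toHC_eq_path hmin Q
    exact ⟨⟨q, hq⟩, .inl hqQ⟩
  · have hw := Sym2.out_fst_mem f.1
    exact ⟨⟨_, (f.2.2 _ hw).1⟩, .inr (adj_toHC_edge hmin f hw)⟩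

lemma HC.two_lt_card [Finite V] (hmin : ∀ v ∈ C, 2 ≤ degIn G C v) {u : V} (hu : u ∈ C)
    (hu2 : 2 < degIn G C u) : 2 < Nat.card (HVert G C) := by
  rw [← Set.ncard_univ, Set.two_lt_ncard_iff]
  by_cases! hbr : ∃ w ∈ G.neighborSet u ∩ C, 2 < degIn G C w
  · obtain ⟨w, ⟨huw, hw⟩, hw2⟩ := hbr
    refine ⟨.inl ⟨u, hu, hu2⟩, .inl ⟨w, hw, hw2⟩, .inr (.inr ⟨s(u, w), huw, fun v hv => ?_⟩),
      trivial, trivial, trivial, by simp [G.ne_of_adj huw], by simp, by simp⟩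
    rcases Sym2.mem_iff.mp hv with rfl | rfl
    exacts [⟨hu, hu2⟩, ⟨hw, hw2⟩]
  have hdeg2 : ∀ w ∈ G.neighborSet u ∩ C, degIn G C w = 2 := fun w hw =>
    le_antisymm (hbr w hw) (hmin w hw.2)
  obtain ⟨w₀, hw₀⟩ : (G.neighborSet u ∩ C).Nonempty :=
    Set.nonempty_of_ncard_ne_zero (by unfold degIn at hu2; omega)
  have hP := maxTwoDegPath_pathThrough hw₀.2 (hdeg2 w₀ hw₀)
  by_cases! hout : ∃ w ∈ G.neighborSet u ∩ C, w ∉ pathThrough G C w₀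
  · obtain ⟨w, hw, hwP⟩ := hout
    have hw2 := hdeg2 w hw
    refine ⟨.inl ⟨u, hu, hu2⟩, .inr (.inl ⟨_, hP⟩),
      .inr (.inl ⟨_, maxTwoDegPath_pathThrough hw.2 hw2⟩), trivial, trivial, trivial,
      by simp, by simp, ?_⟩
    simp only [ne_eq, Sum.inr.injEq, Sum.inl.injEq, Subtype.mk.injEq]
    exact fun h => hwP (h ▸ mem_pathThrough hw.2 hw2)
  have huP : u ∉ pathThrough G C w₀ := fun huP => by
    have := hP.1.2.1 u huP
    omega
  have hsub : G.neighborSet u ∩ C ⊆ G.neighborSet u ∩ pathThrough G C w₀ :=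
    fun w hw => ⟨hw.1, hout w hw⟩
  have hle := Set.ncard_le_ncard hsub
  have := hP.1.ncard_neighborSet_inter_le_two hu huP
  unfold degIn at hu2
  omega

end VertexDeletion

theorem stmt16 {V : Type*} [Fintype V] (G : SimpleGraph V) (C : Set V)
    (hC : TwoVC (G.induce C)) (hnc : ¬ IsCycleGraph (G.induce C)) :
    TwoVC (HC G C) := by
  obtain ⟨u, hu, hu2⟩ := exists_two_lt_degIn hC hnc
  have hcard := HC.two_lt_card hC.two_le_degIn_s16 hu hu2
  refine ⟨hcard, fun x => ?_⟩
  have : Nontrivial (HVert G C) := Finite.one_lt_card_iff_nontrivial.mp (by omega)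
  have : Nonempty ({x}ᶜ : Set (HVert G C)) := (Set.nonempty_compl_of_nontrivial x).to_subtype
  refine Connected.mk ?_
  rcases x with u | P | e
  exacts [HC.preconnected_induce_compl_inl hC u, HC.preconnected_induce_compl_path hC P,
    HC.preconnected_induce_compl_edge hC e]
end

section
/- Let G be a simple undirected graph, C ⊆ V(G) with G[C] 2-vertex-connected, Y a minimal removable set of C with respect to C_v with |Y| > 1. Then every vertex v ∈ Y satisfies deg_{G[(C \ Y) ∪ {v}]}(v) ≤ 1; that is, every vertex of Y has at most one neighbor in (C \ Y) ∪ {v} within G. -/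
open Set

/-- iso between iterated induce and induce of image -/
noncomputable def indIso {V : Type*} (G : SimpleGraph V) (T : Set V) (A : Set ↥T) :
    (G.induce T).induce A ≃g G.induce (Subtype.val '' A) where
  toEquiv := Equiv.Set.image Subtype.val A Subtype.val_injective
  map_rel_iff' := by
    rintro ⟨⟨a, ha⟩, ha'⟩ ⟨⟨b, hb⟩, hb'⟩
    simp [Equiv.Set.image, Equiv.Set.imageOfInjOn]

lemma twoVC_connected {W : Type*} (H : SimpleGraph W) (h : TwoVC H) : H.Connected := by
  obtain ⟨hcard, hconn⟩ := h
  have hfin : Finite W := Nat.finite_of_card_ne_zero (by omega)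
  have hne : Nonempty W := Nat.card_pos_iff.mp (by omega) |>.1
  rw [SimpleGraph.connected_iff]
  refine ⟨fun x y => ?_, hne⟩
  have : ∃ z : W, z ≠ x ∧ z ≠ y := by
    by_contra hz
    push_neg at hz
    have : (Set.univ : Set W) ⊆ {x, y} := by
      intro z _
      rcases Classical.em (z = x) with h | h
      · exact Or.inl h
      · exact Or.inr (hz z h)
    have h1 : (Set.univ : Set W).ncard ≤ ({x, y} : Set W).ncard :=
      Set.ncard_le_ncard this (Set.toFinite _)
    have h2 : ({x, y} : Set W).ncard ≤ 2 := (Set.ncard_insert_le _ _).trans (by simp)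
    rw [Set.ncard_univ] at h1
    omega
  obtain ⟨z, hzx, hzy⟩ := this
  have := (hconn z).preconnected ⟨x, by simp [hzx.symm]⟩ ⟨y, by simp [hzy.symm]⟩
  exact this.map (⟨Subtype.val, fun h => h⟩ : H.induce ({z}ᶜ : Set W) →g H)

lemma connected_insert {V : Type*} {G : SimpleGraph V} {S : Set V} {v a : V}
    (hS : (G.induce S).Connected) (ha : a ∈ S) (hadj : G.Adj v a) :
    (G.induce (insert v S)).Connected := by
  rw [SimpleGraph.connected_iff_exists_forall_reachable]
  refine ⟨⟨a, Or.inr ha⟩, ?_⟩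
  rintro ⟨w, hw⟩
  rcases hw with rfl | hw
  · exact SimpleGraph.Adj.reachable
      (show (G.induce (insert w S)).Adj ⟨a, Or.inr ha⟩ ⟨w, Or.inl rfl⟩ from hadj.symm)
  · have := hS.preconnected ⟨a, ha⟩ ⟨w, hw⟩
    exact this.map (G.induceHomOfLE (Set.subset_insert v S)).toHom

lemma img_compl {V : Type*} (T : Set V) (w : ↥T) :
    Subtype.val '' ({w}ᶜ : Set ↥T) = T \ {(w : V)} := by
  ext x
  simp only [Set.mem_image, Set.mem_compl_iff, Set.mem_singleton_iff, Set.mem_diff]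
  constructor
  · rintro ⟨⟨y, hy⟩, hne, rfl⟩
    exact ⟨hy, fun h => hne (Subtype.ext h)⟩
  · rintro ⟨hx, hne⟩
    exact ⟨⟨x, hx⟩, fun h => hne (congrArg Subtype.val h), rfl⟩

theorem stmt17 {V : Type*} [Fintype V] (G : SimpleGraph V) (C : Set V)
    (hC : TwoVC (G.induce C)) (Y : Set V) (hY : IsMRS (Cv G) C Y) (hcard : 1 < Y.ncard) :
    ∀ v ∈ Y, degIn G ((C \ Y) ∪ {v}) v ≤ 1 := by
  intro v hv
  by_contra hdeg
  push_neg at hdeg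
  obtain ⟨hYne, hYC, hCv, hmin⟩ := hY
  set S := C \ Y with hSdef
  have hvS : v ∉ S := fun h => h.2 hv
  have hvC : v ∈ C := hYC hv
  have hNeq : G.neighborSet v ∩ (S ∪ {v}) = G.neighborSet v ∩ S := by
    ext x
    simp only [Set.mem_inter_iff, Set.mem_union, Set.mem_singleton_iff,
      SimpleGraph.mem_neighborSet]
    constructor
    · rintro ⟨hadj, hx | rfl⟩
      · exact ⟨hadj, hx⟩
      · exact absurd hadj (G.irrefl)
    · rintro ⟨hadj, hx⟩; exact ⟨hadj, Or.inl hx⟩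
  rw [degIn, hNeq] at hdeg
  obtain ⟨a, b, ha, hb, hab⟩ := (Set.one_lt_ncard_iff (Set.toFinite _)).mp hdeg
  have hS2 : TwoVC (G.induce S) := hCv
  -- the key claim
  have hT : TwoVC (G.induce (S ∪ {v})) := by
    constructor
    · have h1 : Nat.card ↥S ≤ Nat.card ↥(S ∪ {v}) := by
        rw [Nat.card_coe_set_eq, Nat.card_coe_set_eq]
        exact Set.ncard_le_ncard Set.subset_union_left (Set.toFinite _)
      exact lt_of_lt_of_le hS2.1 h1
    · intro w
      rw [(indIso G (S ∪ {v}) ({w}ᶜ)).connected_iff, img_compl]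
      rcases w.2 with hw | hw
      · -- w.1 = u ∈ S
        have hvw : v ≠ (w : V) := fun h => hvS (h ▸ hw)
        have hset : (S ∪ {v}) \ {(w : V)} = insert v (S \ {(w : V)}) := by
          ext x
          simp only [Set.mem_diff, Set.mem_union, Set.mem_singleton_iff, Set.mem_insert_iff]
          constructor
          · rintro ⟨hx | rfl, hne⟩
            · exact Or.inr ⟨hx, hne⟩
            · exact Or.inl rfl
          · rintro (rfl | ⟨hx, hne⟩)
            · exact ⟨Or.inr rfl, hvw⟩
            · exact ⟨Or.inl hx, hne⟩
        rw [hset]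
        -- S \ {w} induces a connected graph
        have hconn : (G.induce (S \ {(w : V)})).Connected := by
          have := hS2.2 ⟨(w : V), hw⟩
          rw [(indIso G S ({(⟨(w : V), hw⟩ : ↥S)}ᶜ)).connected_iff] at this
          rwa [img_compl] at this
        -- pick a neighbor of v distinct from w
        have : ∃ c, c ∈ G.neighborSet v ∩ S ∧ c ≠ (w : V) := by
          by_cases haw : a = (w : V)
          · exact ⟨b, hb, fun h => hab (haw ▸ h ▸ rfl)⟩
          · exact ⟨a, ha, haw⟩
        obtain ⟨c, ⟨hcadj, hcS⟩, hcw⟩ := this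
        exact connected_insert hconn ⟨hcS, hcw⟩ hcadj
      · -- w.1 = v
        have hwv : (w : V) = v := hw
        have hset : (S ∪ {v}) \ {(w : V)} = S := by
          rw [hwv]
          ext x
          simp only [Set.mem_diff, Set.mem_union, Set.mem_singleton_iff]
          constructor
          · rintro ⟨hx | rfl, hne⟩
            · exact hx
            · exact absurd rfl hne
          · intro hx
            exact ⟨Or.inl hx, fun h => hvS (h ▸ hx)⟩
        rw [hset]
        exact twoVC_connected _ hS2
  -- derive contradiction with minimality
  have hZne : (Y \ {v}).Nonempty := by
    obtain ⟨y, z, hy, hz, hyz⟩ := (Set.one_lt_ncard_iff (Set.toFinite _)).mp hcard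
    by_cases hyv : y = v
    · exact ⟨z, hz, fun h => hyz (hyv ▸ h ▸ rfl)⟩
    · exact ⟨y, hy, hyv⟩
  have hZss : Y \ {v} ⊂ Y := by
    refine ⟨Set.diff_subset, fun h => ?_⟩
    exact (h hv).2 rfl
  refine hmin (Y \ {v}) hZne hZss ?_
  have hset : C \ (Y \ {v}) = S ∪ {v} := by
    ext x
    simp only [hSdef, Set.mem_diff, Set.mem_union, Set.mem_singleton_iff]
    constructor
    · rintro ⟨hxC, hx⟩
      by_cases hxv : x = v
      · exact Or.inr hxv
      · exact Or.inl ⟨hxC, fun hxY => hx ⟨hxY, hxv⟩⟩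
    · rintro (⟨hxC, hxY⟩ | rfl)
      · exact ⟨hxC, fun h => hxY h.1⟩
      · exact ⟨hvC, fun h => h.2 rfl⟩
  rw [hset]
  exact hT
end
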